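/- arXiv:1212.6317 — 12 statements merged into one kernel-verified Lean document; each statement's English description precedes it below -/
import Mathlib

section
/- Let n ≥ 1 and let λ ↦ p_λ be a Z-homotopy of degree n, i.e. a map from [0,1] to ℂ[X] such that every p_λ has degree n, each coefficient of p_λ is a continuous function of λ, p_0 and p_1 each have exactly two distinct critical values, and p_λ has exactly three distinct critical values for every λ ∈ (0,1). Suppose the two critical values of p_0 are α ≠ β, that p_0 − α has a root of multiplicity at least 3, and that p_0 − β also has a root of multiplicity at least 3. Then it is not the case that for every critical value γ of p_1 all roots of p_1 − γ have multiplicity at most 2. (Equivalently: a plane tree having both a white vertex of degree ≥ 3 and a black vertex of degree ≥ 3 is not Z-homotopic to a chain.) -/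
/-!
Call a critical point `x` of `p` degenerate if `p''(x) = 0` as well, i.e. if `x` is a root of
multiplicity `≥ 3` of `p - p(x)`. The set of `t ∈ [0, 1]` for which `p_t` has a degenerate critical
point is closed, because in a family of fixed degree the critical points stay bounded. It contains
`0`, and it is open to the right at each of its points in `[0, 1)`: roots depend continuously on the
coefficients, so near a root `x₀` of multiplicity `m ≥ 3` of `p_{t₀} - c` the derivative of a nearby
`p_t` has `m - 1` roots; if these are simple and share one critical value `c'`, they are double
roots of `p_t - c'`, which has only `m < 2 (m - 1)` roots near `x₀`. So a nearby `p_t` without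
degenerate critical points has two critical values near `c`, besides one near each other critical
value of `p_{t₀}`: at least `4` in total, both at `t₀ = 0` (two critical values, both degenerate)
and for `t₀ ∈ (0, 1)` (three critical values), whereas `p_t` has only `3`. Hence `p_1` has a
degenerate critical point: some `p_1 - γ` has a root of multiplicity `≥ 3`.
-/

open Polynomial

/-- The set of critical values of a polynomial `p`: values of `p` at the roots of `p'`. -/
noncomputable def criticalValues (p : ℂ[X]) : Set ℂ :=
  (fun x => p.eval x) '' {x : ℂ | p.derivative.eval x = 0}

open Filter Topology Metric Finset

theorem Set.Finite.exists_pos_forall_two_mul_le_dist {X : Type*} [MetricSpace X] {s : Set X}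
    (hs : s.Finite) : ∃ ε > 0, ∀ a ∈ s, ∀ b ∈ s, a ≠ b → 2 * ε ≤ dist a b := by
  rcases s.subsingleton_or_nontrivial with hs' | hs'
  · exact ⟨1, one_pos, fun a ha b hb hab => absurd (hs' ha hb) hab⟩
  · exact ⟨s.infsep / 2, by linarith [hs.infsep_pos_iff_nontrivial.2 hs'],
      fun a ha b hb hab => by linarith [Set.infsep_le_dist_of_mem ha hb hab]⟩

theorem Set.sum_ncard_inter_le_ncard {α ι : Type*} {S : Set α} (hS : S.Finite) {F : Finset ι}
    {U : ι → Set α} (hU : (F : Set ι).PairwiseDisjoint U) :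
    ∑ i ∈ F, (S ∩ U i).ncard ≤ S.ncard := by
  rw [← finsum_mem_coe_finset, ← F.finite_toSet.ncard_biUnion
    (fun _ _ => hS.subset Set.inter_subset_left) (hU.mono fun _ => Set.inter_subset_right)]
  exact Set.ncard_le_ncard (Set.iUnion₂_subset fun _ _ => Set.inter_subset_left) hS

theorem Multiset.exists_fin_enumeration {α : Type*} {d : ℕ} (s : Multiset α)
    (hs : Multiset.card s = d) : ∃ r : Fin d → α, univ.val.map r = s := by
  obtain ⟨l, rfl⟩ := Quot.exists_rep s
  obtain rfl : l.length = d := hs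
  exact ⟨l.get, by rw [Fin.univ_val_map, List.ofFn_get]; rfl⟩

theorem eq_C_leadingCoeff_mul_prod_of_map_eq_roots {K : Type*} [Field K] [IsAlgClosed K]
    {p : K[X]} {d : ℕ} {r : Fin d → K} (hr : univ.val.map r = p.roots) :
    p = C p.leadingCoeff * ∏ i, (X - C (r i)) := by
  conv_lhs => rw [← C_leadingCoeff_mul_prod_multiset_X_sub_C
    (IsAlgClosed.card_roots_eq_natDegree (p := p)), ← hr, Multiset.map_map]
  rw [prod_eq_multiset_prod]
  rfl

theorem roots_C_mul_prod_X_sub_C {K : Type*} [Field K] {a : K} (ha : a ≠ 0) {d : ℕ}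
    (r : Fin d → K) : (C a * ∏ i, (X - C (r i))).roots = univ.val.map r := by
  rw [roots_C_mul _ ha, prod_eq_multiset_prod, ← roots_multiset_prod_X_sub_C (univ.val.map r),
    Multiset.map_map]
  rfl

theorem tendsto_eval_of_tendsto_coeff {R ι : Type*} [CommSemiring R] [TopologicalSpace R]
    [IsTopologicalSemiring R] {l : Filter ι} {q : ι → R[X]} {Q : R[X]}
    (hq : ∀ i, Tendsto (fun k => (q k).coeff i) l (𝓝 (Q.coeff i)))
    (hdeg : ∀ᶠ k in l, (q k).natDegree ≤ Q.natDegree)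
    {z : ι → R} {w : R} (hz : Tendsto z l (𝓝 w)) :
    Tendsto (fun k => (q k).eval (z k)) l (𝓝 (Q.eval w)) := by
  rw [eval_eq_sum_range]
  refine (tendsto_finsetSum _ fun i _ => (hq i).mul (hz.pow i)).congr' ?_
  filter_upwards [hdeg] with k hk
  exact (eval_eq_sum_range' (Nat.lt_succ_of_le hk) _).symm

/-- The degree condition is what keeps the roots of `q k` from escaping to infinity. -/
structure TendstoSameDegree {ι : Type*} (q : ι → ℂ[X]) (l : Filter ι) (Q : ℂ[X]) : Prop where
  coeff : ∀ i, Tendsto (fun k => (q k).coeff i) l (𝓝 (Q.coeff i))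
  natDegree : ∀ᶠ k in l, (q k).natDegree = Q.natDegree

def HasDegenerateCriticalPoint {R : Type*} [CommSemiring R] (p : R[X]) : Prop :=
  ∃ x, (derivative p).IsRoot x ∧ (derivative (derivative p)).IsRoot x

theorem two_lt_rootMultiplicity_sub_C_iff {R : Type*} [CommRing R] [IsDomain R] [CharZero R]
    {p : R[X]} {c x : R} (hp : p - C c ≠ 0) :
    2 < (p - C c).rootMultiplicity x ↔
      p.eval x = c ∧ (derivative p).IsRoot x ∧ (derivative (derivative p)).IsRoot x := by
  rw [lt_rootMultiplicity_iff_isRoot_iterate_derivative hp]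
  constructor
  · intro h
    exact ⟨sub_eq_zero.1 (by simpa using h 0 (by norm_num)), by simpa using h 1 (by norm_num),
      by simpa using h 2 le_rfl⟩
  · rintro ⟨h0, h1, h2⟩ m hm
    interval_cases m <;> simp_all

theorem two_mul_card_filter_roots_derivative_le {R : Type*} [CommRing R] [IsDomain R]
    (q : R[X]) (c : R) (P : R → Prop) [DecidablePred P]
    (h : ∀ z, P z → (derivative q).IsRoot z →
      q.eval z = c ∧ ¬(derivative (derivative q)).IsRoot z) :
    2 * Multiset.card ((derivative q).roots.filter P) ≤
      Multiset.card ((q - C c).roots.filter P) := by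
  classical
  rw [← Multiset.card_nsmul]
  refine Multiset.card_le_card (Multiset.le_iff_count.2 fun z => ?_)
  rw [Multiset.count_nsmul, Multiset.count_filter, Multiset.count_filter, count_roots, count_roots]
  split_ifs with hz
  · rcases Nat.eq_zero_or_pos ((derivative q).rootMultiplicity z) with h0 | hpos
    · simp [h0]
    have hq' : derivative q ≠ 0 := fun h0 => by simp [h0] at hpos
    have hroot := (rootMultiplicity_pos hq').1 hpos
    obtain ⟨hc, hsimple⟩ := h z hz hroot
    have hsub : q - C c ≠ 0 := fun h0 => hq' (by simpa using congrArg derivative h0)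
    have h1 : (derivative q).rootMultiplicity z ≤ 1 :=
      not_lt.1 fun hlt => hsimple ((one_lt_rootMultiplicity_iff_isRoot hq').1 hlt).2
    have h2 : 1 < (q - C c).rootMultiplicity z :=
      (one_lt_rootMultiplicity_iff_isRoot hsub).2 ⟨by simp [hc], by simpa using hroot⟩
    omega
  · simp

theorem hasDegenerateCriticalPoint_or_exists_ne {R : Type*} [CommRing R] [IsDomain R]
    {q : R[X]} {c : R} {P : R → Prop} [DecidablePred P] {m : ℕ} (hm : 2 < m)
    (hT : Multiset.card ((derivative q).roots.filter P) = m - 1)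
    (hS : Multiset.card ((q - C c).roots.filter P) = m) :
    HasDegenerateCriticalPoint q ∨ ∃ w, P w ∧ (derivative q).IsRoot w ∧ q.eval w ≠ c := by
  by_contra! h
  have := two_mul_card_filter_roots_derivative_le q c P fun w hw hroot =>
    ⟨h.2 w hw hroot, fun h2 => h.1 ⟨w, hroot, h2⟩⟩
  omega

theorem criticalValues_finite {p : ℂ[X]} (hp : p.derivative ≠ 0) : (criticalValues p).Finite :=
  (finite_setOfPred_isRoot hp).image _

namespace TendstoSameDegree

variable {ι : Type*} {l : Filter ι} {q : ι → ℂ[X]} {Q : ℂ[X]}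

theorem mono (h : TendstoSameDegree q l Q) {l' : Filter ι} (hl : l' ≤ l) :
    TendstoSameDegree q l' Q :=
  ⟨fun i => (h.coeff i).mono_left hl, h.natDegree.filter_mono hl⟩

theorem derivative (h : TendstoSameDegree q l Q) :
    TendstoSameDegree (fun k => (q k).derivative) l Q.derivative where
  coeff i := by simpa only [coeff_derivative] using (h.coeff (i + 1)).mul_const _
  natDegree := h.natDegree.mono fun k hk => by simp [hk]

theorem sub_C (h : TendstoSameDegree q l Q) {c : ι → ℂ} {c₀ : ℂ} (hc : Tendsto c l (𝓝 c₀)) :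
    TendstoSameDegree (fun k => q k - C (c k)) l (Q - C c₀) where
  coeff i := by
    rcases eq_or_ne i 0 with rfl | hi
    · simpa using (h.coeff 0).sub hc
    · simpa [coeff_C, hi] using h.coeff i
  natDegree := h.natDegree.mono fun k hk => by simp [hk]

theorem tendsto_eval (h : TendstoSameDegree q l Q) {z : ι → ℂ} {w : ℂ} (hz : Tendsto z l (𝓝 w)) :
    Tendsto (fun k => (q k).eval (z k)) l (𝓝 (Q.eval w)) :=
  tendsto_eval_of_tendsto_coeff h.coeff (h.natDegree.mono fun _ hk => hk.le) hz

theorem isRoot_of_tendsto (h : TendstoSameDegree q l Q) [l.NeBot] {z : ι → ℂ} {w : ℂ}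
    (hz : Tendsto z l (𝓝 w)) (hroot : ∀ᶠ k in l, (q k).IsRoot (z k)) : Q.IsRoot w :=
  tendsto_nhds_unique (h.tendsto_eval hz)
    (tendsto_const_nhds.congr' (hroot.mono fun _ hk => hk.symm))

theorem eventually_dist_eval_lt (h : TendstoSameDegree q l Q) (x₀ : ℂ) {δ : ℝ} (hδ : 0 < δ) :
    ∃ ε > 0, ∀ᶠ k in l, ∀ z, dist z x₀ < ε → dist ((q k).eval z) (Q.eval x₀) < δ := by
  have hprod : TendstoSameDegree (fun kz : ι × ℂ => q kz.1) (l ×ˢ 𝓝 x₀) Q :=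
    ⟨fun i => (h.coeff i).comp tendsto_fst, tendsto_fst.eventually h.natDegree⟩
  obtain ⟨P, hP, U, hU, hPU⟩ := eventually_prod_iff.1 <|
    (hprod.tendsto_eval tendsto_snd).eventually (ball_mem_nhds _ hδ)
  obtain ⟨ε, hε, hεU⟩ := Metric.eventually_nhds_iff.1 hU
  exact ⟨ε, hε, hP.mono fun k hk z hz => hPU hk (hεU hz)⟩

open NNReal in
theorem tendsto_cauchyBound (h : TendstoSameDegree q l Q) (hQ : Q ≠ 0) :
    Tendsto (fun k => cauchyBound (q k)) l (𝓝 (cauchyBound Q)) := by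
  have hsup : Tendsto (fun k => (range Q.natDegree).sup fun i => ‖(q k).coeff i‖₊) l
      (𝓝 ((range Q.natDegree).sup fun i => ‖Q.coeff i‖₊)) :=
    Tendsto.finset_sup_nhds_apply fun i _ => (h.coeff i).nnnorm
  refine ((hsup.div (h.coeff Q.natDegree).nnnorm (by simpa using hQ)).add_const 1).congr' ?_
  filter_upwards [h.natDegree] with k hk
  simp [cauchyBound, leadingCoeff, hk]

theorem eventually_ne_zero (h : TendstoSameDegree q l Q) (hQ : Q ≠ 0) : ∀ᶠ k in l, q k ≠ 0 :=
  ((h.coeff Q.natDegree).eventually_ne (leadingCoeff_ne_zero.2 hQ)).mono fun _ hk h0 =>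
    hk (by rw [h0, coeff_zero])

theorem eventually_isRoot_mem_closedBall (h : TendstoSameDegree q l Q) (hQ : Q ≠ 0) :
    ∀ᶠ k in l, ∀ z, (q k).IsRoot z → z ∈ closedBall (0 : ℂ) (cauchyBound Q + 1) := by
  filter_upwards [(h.tendsto_cauchyBound hQ).eventually (eventually_lt_nhds (lt_add_one _)),
    h.eventually_ne_zero hQ] with k hk hq0 z hz
  rw [mem_closedBall_zero_iff, ← coe_nnnorm]
  exact_mod_cast ((hz.norm_lt_cauchyBound hq0).trans hk).le

theorem eventually_exists_roots_dist_lt (h : TendstoSameDegree q l Q) (hQ : Q ≠ 0) {ε : ℝ}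
    (hε : 0 < ε) :
    ∀ᶠ k in l, ∃ r R : Fin Q.natDegree → ℂ, univ.val.map r = (q k).roots ∧
      univ.val.map R = Q.roots ∧ ∀ i, dist (r i) (R i) < ε := by
  -- Otherwise, along an ultrafilter of bad indices the root enumerations stay in a compact ball,
  -- so they converge, and the limit enumerates the roots of `Q`.
  set d := Q.natDegree
  set Good : ι → Prop := fun k => ∃ r R : Fin d → ℂ, univ.val.map r = (q k).roots ∧
      univ.val.map R = Q.roots ∧ ∀ i, dist (r i) (R i) < ε
  by_contra hbad
  rw [not_eventually, frequently_iff_neBot] at hbad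
  set U := Ultrafilter.of (l ⊓ 𝓟 {k | ¬Good k})
  have hUbad : ∀ᶠ k in U, ¬Good k :=
    Ultrafilter.of_le (l ⊓ 𝓟 {k | ¬Good k}) (mem_inf_of_right (mem_principal_self _))
  have hqU := h.mono ((Ultrafilter.of_le (l ⊓ 𝓟 {k | ¬Good k})).trans inf_le_left)
  obtain ⟨r, hr⟩ : ∃ r : ι → Fin d → ℂ, ∀ᶠ k in U, univ.val.map (r k) = (q k).roots :=
    (hqU.natDegree.mono fun k hk => Multiset.exists_fin_enumeration _
      (by rw [IsAlgClosed.card_roots_eq_natDegree, hk])).choice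
  obtain ⟨R, -, hR⟩ := (isCompact_closedBall (0 : Fin d → ℂ) (cauchyBound Q + 1)
    ).ultrafilter_le_nhds' (U.map r) <| Ultrafilter.mem_map.2 <| by
      filter_upwards [hr, hqU.eventually_isRoot_mem_closedBall hQ] with k hk hball
      rw [Set.mem_preimage, mem_closedBall_zero_iff, pi_norm_le_iff_of_nonneg (by positivity)]
      exact fun i => mem_closedBall_zero_iff.1 <|
        hball _ (isRoot_of_mem_roots (hk ▸ Multiset.mem_map_of_mem _ (mem_univ_val i)))
  have hRi : ∀ i, Tendsto (fun k => r k i) U (𝓝 (R i)) := fun i =>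
    ((continuous_apply i).tendsto R).comp hR
  have hlc : Q.leadingCoeff ≠ 0 := leadingCoeff_ne_zero.2 hQ
  have hfactor : Q = C Q.leadingCoeff * ∏ i, (X - C (R i)) := by
    refine Polynomial.funext fun z => tendsto_nhds_unique (hqU.tendsto_eval tendsto_const_nhds) ?_
    have hev : ∀ᶠ k in U, (q k).coeff d * ∏ i, (z - r k i) = (q k).eval z := by
      filter_upwards [hr, hqU.natDegree] with k hk hdk
      conv_rhs => rw [eq_C_leadingCoeff_mul_prod_of_map_eq_roots hk]
      simp [eval_prod, leadingCoeff, hdk, d]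
    simp only [eval_mul, eval_C, eval_prod, eval_sub, eval_X]
    exact ((hqU.coeff d).mul
      (tendsto_finsetProd _ fun i _ => tendsto_const_nhds.sub (hRi i))).congr' hev
  have hclose : ∀ᶠ k in U, ∀ i, dist (r k i) (R i) < ε :=
    eventually_all.2 fun i => Metric.tendsto_nhds.1 (hRi i) ε hε
  obtain ⟨k, hk, hkclose, hkbad⟩ := (hr.and (hclose.and hUbad)).exists
  exact hkbad ⟨r k, R, hk, by rw [hfactor, roots_C_mul_prod_X_sub_C hlc], hkclose⟩

theorem eventually_card_filter_roots (h : TendstoSameDegree q l Q) (hQ : Q ≠ 0) {x₀ : ℂ} {ε : ℝ}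
    (hε : 0 < ε) (hsep : ∀ y ∈ Q.roots, y ≠ x₀ → 2 * ε ≤ dist y x₀) :
    ∀ᶠ k in l, Multiset.card ((q k).roots.filter (dist · x₀ < ε)) = Q.rootMultiplicity x₀ := by
  filter_upwards [h.eventually_exists_roots_dist_lt hQ hε] with k ⟨r, R, hr, hR, hrR⟩
  rw [← count_roots, ← hR, ← hr, Multiset.filter_map, Multiset.card_map, Multiset.count_map]
  congr 1
  refine Multiset.filter_congr fun i _ => ⟨fun hi => ?_, fun hi => hi ▸ hrR i⟩
  by_contra hne
  have := hsep (R i) (hR ▸ Multiset.mem_map_of_mem _ (mem_univ_val i)) (Ne.symm hne)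
  linarith [dist_triangle_left (R i) x₀ (r i), hrR i, show dist (r i) x₀ < ε from hi]

theorem tendsto_of_mem_roots (h : TendstoSameDegree q l Q) (hQ : Q ≠ 0) {x₀ : ℂ} {ε : ℝ}
    (hε : 0 < ε) (hsep : ∀ y ∈ Q.roots, y ≠ x₀ → 2 * ε ≤ dist y x₀) {z : ι → ℂ}
    (hz : ∀ᶠ k in l, z k ∈ (q k).roots ∧ dist (z k) x₀ < ε) : Tendsto z l (𝓝 x₀) := by
  -- Both the roots within `ε` of `x₀` and those within any smaller radius are eventually counted
  -- by the multiplicity of `x₀`, so they are the same roots.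
  refine Metric.tendsto_nhds.2 fun ε' hε' => ?_
  have hη : 0 < min ε ε' := lt_min hε hε'
  filter_upwards [hz, h.eventually_card_filter_roots hQ hε hsep,
    h.eventually_card_filter_roots hQ hη fun y hy hne =>
      (mul_le_mul_of_nonneg_left (min_le_left _ _) zero_le_two).trans (hsep y hy hne)]
    with k hzk hcardε hcardη
  have hfilter : (q k).roots.filter (dist · x₀ < min ε ε') = (q k).roots.filter (dist · x₀ < ε) :=
    Multiset.eq_of_le_of_card_le
      (Multiset.monotone_filter_right _ fun _ hb => hb.trans_le (min_le_left _ _))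
      (by rw [hcardε, hcardη])
  have hmem : z k ∈ (q k).roots.filter (dist · x₀ < ε) := Multiset.mem_filter.2 hzk
  rw [← hfilter] at hmem
  exact (Multiset.mem_filter.1 hmem).2.trans_le (min_le_right _ _)

theorem exists_tendsto_mem_roots (h : TendstoSameDegree q l Q) (hQ : Q ≠ 0) {x₀ : ℂ} {ε : ℝ}
    (hε : 0 < ε) (hsep : ∀ y ∈ Q.roots, y ≠ x₀ → 2 * ε ≤ dist y x₀) (hx₀ : Q.IsRoot x₀) :
    ∃ z : ι → ℂ, (∀ᶠ k in l, z k ∈ (q k).roots ∧ dist (z k) x₀ < ε) ∧ Tendsto z l (𝓝 x₀) := by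
  have hz : ∀ᶠ k in l, ∃ z, z ∈ (q k).roots ∧ dist z x₀ < ε :=
    (h.eventually_card_filter_roots hQ hε hsep).mono fun k hk => by
      obtain ⟨w, hw⟩ := Multiset.card_pos_iff_exists_mem.1 (hk ▸ (rootMultiplicity_pos hQ).2 hx₀)
      exact ⟨w, Multiset.mem_filter.1 hw⟩
  set z : ι → ℂ := fun k => Classical.epsilon fun z => z ∈ (q k).roots ∧ dist z x₀ < ε
  have hz' : ∀ᶠ k in l, z k ∈ (q k).roots ∧ dist (z k) x₀ < ε :=
    hz.mono fun _ hk => Classical.epsilon_spec hk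
  exact ⟨z, hz', h.tendsto_of_mem_roots hQ hε hsep hz'⟩

theorem hasDegenerateCriticalPoint (h : TendstoSameDegree q l Q) [l.NeBot]
    (hQ : Q.derivative ≠ 0) (hD : ∀ᶠ k in l, HasDegenerateCriticalPoint (q k)) :
    HasDegenerateCriticalPoint Q := by
  obtain ⟨z, hz⟩ := hD.choice
  set U := Ultrafilter.of l
  have hzU := hz.filter_mono (Ultrafilter.of_le l)
  have hqU := h.mono (Ultrafilter.of_le l)
  obtain ⟨w, -, hw⟩ := (isCompact_closedBall (0 : ℂ) (cauchyBound Q.derivative + 1)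
    ).ultrafilter_le_nhds' (U.map z) <| Ultrafilter.mem_map.2 <| by
      filter_upwards [hqU.derivative.eventually_isRoot_mem_closedBall hQ, hzU] with k hk hzk
      exact hk _ hzk.1
  exact ⟨w, hqU.derivative.isRoot_of_tendsto hw (hzU.mono fun _ hk => hk.1),
    hqU.derivative.derivative.isRoot_of_tendsto hw (hzU.mono fun _ hk => hk.2)⟩

theorem eventually_criticalValues_inter_ball_nonempty (h : TendstoSameDegree q l Q)
    (hQ : Q.derivative ≠ 0) {c : ℂ} (hc : c ∈ criticalValues Q) {δ : ℝ} (hδ : 0 < δ) :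
    ∀ᶠ k in l, (criticalValues (q k) ∩ ball c δ).Nonempty := by
  obtain ⟨x, hx, rfl⟩ := hc
  obtain ⟨ε, hε, hclose⟩ := h.eventually_dist_eval_lt x hδ
  filter_upwards [hclose, h.derivative.eventually_exists_roots_dist_lt hQ hε]
    with k hk ⟨r, R, hr, hR, hrR⟩
  obtain ⟨i, -, rfl⟩ := Multiset.mem_map.1 (hR ▸ (mem_roots hQ).2 hx)
  exact ⟨_, ⟨r i, isRoot_of_mem_roots (hr ▸ Multiset.mem_map_of_mem _ (mem_univ_val i)), rfl⟩,
    hk _ (hrR i)⟩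

theorem eventually_hasDegenerateCriticalPoint_or_nontrivial (h : TendstoSameDegree q l Q)
    {c x₀ : ℂ} (hm : 2 < (Q - C c).rootMultiplicity x₀) {δ : ℝ} (hδ : 0 < δ) :
    ∀ᶠ k in l, HasDegenerateCriticalPoint (q k) ∨ (criticalValues (q k) ∩ ball c δ).Nontrivial := by
  set m := (Q - C c).rootMultiplicity x₀
  have hQc : Q - C c ≠ 0 := fun h0 => by simp [m, h0] at hm
  obtain ⟨hx₀, -, -⟩ := (two_lt_rootMultiplicity_sub_C_iff hQc).1 hm
  have hm' : Q.derivative.rootMultiplicity x₀ = m - 1 := by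
    simpa using derivative_rootMultiplicity_of_root (p := Q - C c) (by simp [hx₀])
  have hQ' : Q.derivative ≠ 0 := fun h0 => by simp [h0] at hm'; omega
  obtain ⟨ε₁, hε₁, hsep⟩ := ((Q - C c).roots + Q.derivative.roots).toFinset.finite_toSet.insert x₀
    |>.exists_pos_forall_two_mul_le_dist
  obtain ⟨ε₂, hε₂, hclose⟩ := h.eventually_dist_eval_lt x₀ hδ
  set ε := min ε₁ ε₂
  have hε : 0 < ε := lt_min hε₁ hε₂
  have hsep' : ∀ y ∈ (Q - C c).roots + Q.derivative.roots, y ≠ x₀ → 2 * ε ≤ dist y x₀ :=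
    fun y hy hne => (mul_le_mul_of_nonneg_left (min_le_left _ _) zero_le_two).trans <|
      hsep y (Set.mem_insert_of_mem _ (Multiset.mem_toFinset.2 hy)) x₀ (Set.mem_insert _ _) hne
  have hsepQ : ∀ y ∈ (Q - C c).roots, y ≠ x₀ → 2 * ε ≤ dist y x₀ :=
    fun y hy => hsep' y (Multiset.mem_add.2 (Or.inl hy))
  have hsepD : ∀ y ∈ Q.derivative.roots, y ≠ x₀ → 2 * ε ≤ dist y x₀ :=
    fun y hy => hsep' y (Multiset.mem_add.2 (Or.inr hy))
  -- The values at critical points `z k` of `q k` tending to `x₀` tend to `c`, so the `m` roots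
  -- of `Q - c` at `x₀` persist as roots of `q k - q k (z k)` near `x₀`.
  obtain ⟨z, hz, hzt⟩ := h.derivative.exists_tendsto_mem_roots hQ' hε hsepD
    ((rootMultiplicity_pos hQ').1 (by omega))
  have hct : Tendsto (fun k => (q k).eval (z k)) l (𝓝 c) := hx₀ ▸ h.tendsto_eval hzt
  filter_upwards [h.derivative.eventually_card_filter_roots hQ' hε hsepD, hz, hclose,
    (h.sub_C hct).eventually_card_filter_roots hQc hε hsepQ]
    with k hcardD hzk hcl hcardQ
  have hval : ∀ w, dist w x₀ < ε → (q k).derivative.IsRoot w →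
      (q k).eval w ∈ criticalValues (q k) ∩ ball c δ := fun w hw hroot =>
    ⟨⟨w, hroot, rfl⟩, hx₀ ▸ hcl w (hw.trans_le (min_le_right _ _))⟩
  rcases hasDegenerateCriticalPoint_or_exists_ne hm (hcardD.trans hm') hcardQ with
    hD | ⟨w, hw, hroot, hne⟩
  · exact Or.inl hD
  · exact Or.inr ⟨_, hval w hw hroot, _, hval _ hzk.2 (isRoot_of_mem_roots hzk.1), hne⟩

theorem eventually_hasDegenerateCriticalPoint (h : TendstoSameDegree q l Q)
    (hQ : 0 < Q.natDegree) (F : Finset ℂ) (hF : ∀ c ∈ F, ∃ x, 2 < (Q - C c).rootMultiplicity x)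
    (hcard : ∀ᶠ k in l, (criticalValues (q k)).ncard < (criticalValues Q).ncard + F.card) :
    ∀ᶠ k in l, HasDegenerateCriticalPoint (q k) := by
  have hQ' : Q.derivative ≠ 0 := by simpa using hQ.ne'
  set G := (criticalValues_finite hQ').toFinset
  have hFG : F ⊆ G := fun c hc => by
    obtain ⟨x, hx⟩ := hF c hc
    have hQc : Q - C c ≠ 0 := fun h0 => by simp [h0] at hx
    obtain ⟨rfl, hx', -⟩ := (two_lt_rootMultiplicity_sub_C_iff hQc).1 hx
    exact (criticalValues_finite hQ').mem_toFinset.2 ⟨x, hx', rfl⟩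
  obtain ⟨δ, hδ, hsep⟩ := (criticalValues_finite hQ').exists_pos_forall_two_mul_le_dist
  have hdisj : (G : Set ℂ).PairwiseDisjoint (ball · δ) := fun a ha b hb hab =>
    ball_disjoint_ball (by linarith [hsep a (by simpa [G] using ha) b (by simpa [G] using hb) hab])
  filter_upwards [G.eventually_all.2 fun c hc => h.eventually_criticalValues_inter_ball_nonempty hQ'
      ((criticalValues_finite hQ').mem_toFinset.1 hc) hδ,
    F.eventually_all.2 fun c hc => (hF c hc).elim fun x hx =>
      h.eventually_hasDegenerateCriticalPoint_or_nontrivial hx hδ,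
    h.natDegree, hcard] with k hone htwo hk hcardk
  by_contra hnd
  have hfin : (criticalValues (q k)).Finite := criticalValues_finite (by simpa [hk] using hQ.ne')
  refine hcardk.not_ge ?_
  calc (criticalValues Q).ncard + F.card = ∑ c ∈ G, (1 + if c ∈ F then 1 else 0) := by
        rw [sum_add_distrib, sum_boole, filter_mem_eq_inter, inter_eq_right.2 hFG,
          Set.ncard_eq_toFinset_card _ (criticalValues_finite hQ')]
        simp [G]
    _ ≤ ∑ c ∈ G, (criticalValues (q k) ∩ ball c δ).ncard := sum_le_sum fun c hc => by
        have : Finite ↑(criticalValues (q k) ∩ ball c δ) :=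
          (hfin.subset Set.inter_subset_left).to_subtype
        split_ifs with hcF
        · exact Set.one_lt_ncard_iff_nontrivial.2 ((htwo c hcF).resolve_left hnd)
        · exact (Set.ncard_pos (Set.toFinite _)).2 (hone c hc)
    _ ≤ (criticalValues (q k)).ncard := Set.sum_ncard_inter_le_ncard hfin hdisj

end TendstoSameDegree

theorem tendstoSameDegree_nhdsWithin {X : Type*} [TopologicalSpace X] {p : X → ℂ[X]} {s : Set X}
    {n : ℕ} (hdeg : ∀ t ∈ s, (p t).degree = n)
    (hcont : ∀ i, ContinuousOn (fun t => (p t).coeff i) s) {t₀ : X} (ht₀ : t₀ ∈ s) :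
    TendstoSameDegree p (𝓝[s] t₀) (p t₀) :=
  ⟨fun i => hcont i t₀ ht₀, eventually_nhdsWithin_of_forall fun t ht => by
    rw [natDegree_eq_of_degree_eq_some (hdeg t ht), natDegree_eq_of_degree_eq_some (hdeg t₀ ht₀)]⟩

theorem isClosed_setOf_hasDegenerateCriticalPoint_inter {X : Type*} [TopologicalSpace X]
    {p : X → ℂ[X]} {s : Set X} (hs : IsClosed s) {n : ℕ} (hn : 0 < n)
    (hdeg : ∀ t ∈ s, (p t).degree = n) (hcont : ∀ i, ContinuousOn (fun t => (p t).coeff i) s) :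
    IsClosed ({t | HasDegenerateCriticalPoint (p t)} ∩ s) := by
  refine isClosed_of_closure_subset fun t₀ ht₀ => ?_
  have ht₀s : t₀ ∈ s := closure_minimal Set.inter_subset_right hs ht₀
  have : (𝓝[{t | HasDegenerateCriticalPoint (p t)} ∩ s] t₀).NeBot :=
    mem_closure_iff_nhdsWithin_neBot.1 ht₀
  have hlim : TendstoSameDegree p (𝓝[{t | HasDegenerateCriticalPoint (p t)} ∩ s] t₀) (p t₀) :=
    (tendstoSameDegree_nhdsWithin hdeg hcont ht₀s).mono (nhdsWithin_mono _ Set.inter_subset_right)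
  have hQ' : (p t₀).derivative ≠ 0 := by
    rw [Ne, derivative_eq_zero, natDegree_eq_of_degree_eq_some (hdeg t₀ ht₀s)]
    exact hn.ne'
  exact ⟨hlim.hasDegenerateCriticalPoint hQ' (eventually_nhdsWithin_of_forall fun _ ht => ht.1),
    ht₀s⟩

theorem setOf_hasDegenerateCriticalPoint_mem_nhdsGT {p : ℝ → ℂ[X]} {a b : ℝ} {n N : ℕ}
    (hn : 0 < n) (hdeg : ∀ t ∈ Set.Icc a b, (p t).degree = n)
    (hcont : ∀ i, ContinuousOn (fun t => (p t).coeff i) (Set.Icc a b))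
    (hN : ∀ t ∈ Set.Ioo a b, (criticalValues (p t)).ncard ≤ N) {t₀ : ℝ} (ht₀ : t₀ ∈ Set.Ico a b)
    (F : Finset ℂ) (hF : ∀ c ∈ F, ∃ x, 2 < (p t₀ - C c).rootMultiplicity x)
    (hcard : N < (criticalValues (p t₀)).ncard + F.card) :
    {t | HasDegenerateCriticalPoint (p t)} ∈ 𝓝[>] t₀ := by
  have hIoo : Set.Ioo t₀ b ∈ 𝓝[>] t₀ := Ioo_mem_nhdsGT ht₀.2
  have hle : 𝓝[>] t₀ ≤ 𝓝[Set.Icc a b] t₀ := nhdsWithin_le_of_mem <|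
    mem_of_superset hIoo (Set.Ioo_subset_Icc_self.trans (Set.Icc_subset_Icc_left ht₀.1))
  refine ((tendstoSameDegree_nhdsWithin hdeg hcont (Set.Ico_subset_Icc_self ht₀)).mono
    hle).eventually_hasDegenerateCriticalPoint ?_ F hF ?_
  · rwa [natDegree_eq_of_degree_eq_some (hdeg t₀ (Set.Ico_subset_Icc_self ht₀))]
  · filter_upwards [hIoo] with t ht
    exact (hN t ⟨ht₀.1.trans_lt ht.1, ht.2⟩).trans_lt hcard

theorem not_Zhomotopic_to_chain_general (n : ℕ) (hn : 1 ≤ n) (p : ℝ → ℂ[X])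
    (hdeg : ∀ t ∈ Set.Icc (0 : ℝ) 1, (p t).degree = n)
    (hcont : ∀ i : ℕ, ContinuousOn (fun t => (p t).coeff i) (Set.Icc (0 : ℝ) 1))
    (h0 : (criticalValues (p 0)).ncard = 2)
    (hmid : ∀ t ∈ Set.Ioo (0 : ℝ) 1, (criticalValues (p t)).ncard = 3)
    (α β : ℂ) (hαβ : α ≠ β)
    (hα : ∃ x : ℂ, 3 ≤ (p 0 - C α).rootMultiplicity x)
    (hβ : ∃ x : ℂ, 3 ≤ (p 0 - C β).rootMultiplicity x) :
    ¬ (∀ γ ∈ criticalValues (p 1), ∀ x : ℂ, (p 1 - C γ).rootMultiplicity x ≤ 2) := by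
  intro hchain
  have hsub : ∀ {t c}, t ∈ Set.Icc (0 : ℝ) 1 → p t - C c ≠ 0 := fun ht =>
    ne_zero_of_natDegree_gt (n := 0) <| by
      rw [natDegree_sub_C, natDegree_eq_of_degree_eq_some (hdeg _ ht)]; omega
  have hopen : ∀ t₀ ∈ {t | HasDegenerateCriticalPoint (p t)} ∩ Set.Ico 0 1,
      {t | HasDegenerateCriticalPoint (p t)} ∈ 𝓝[>] t₀ := by
    rintro t₀ ⟨⟨x, hx⟩, ht₀⟩
    have hstep := setOf_hasDegenerateCriticalPoint_mem_nhdsGT hn hdeg hcont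
      (fun t ht => (hmid t ht).le) ht₀
    rcases ht₀.1.eq_or_lt with rfl | hpos
    · exact hstep {α, β} (by simpa using ⟨hα, hβ⟩) (by rw [h0, card_pair hαβ]; norm_num)
    · have hxt₀ := (two_lt_rootMultiplicity_sub_C_iff (hsub (Set.Ico_subset_Icc_self ht₀))).2
        ⟨rfl, hx⟩
      exact hstep {(p t₀).eval x} (by simpa using ⟨x, hxt₀⟩)
        (by rw [hmid t₀ ⟨hpos, ht₀.2⟩, card_singleton]; norm_num)
  obtain ⟨x, hαx⟩ := hα
  have hD0 : HasDegenerateCriticalPoint (p 0) :=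
    ⟨x, ((two_lt_rootMultiplicity_sub_C_iff (hsub (Set.left_mem_Icc.2 zero_le_one))).1 hαx).2⟩
  obtain ⟨x, hx⟩ := (isClosed_setOf_hasDegenerateCriticalPoint_inter isClosed_Icc hn hdeg
    hcont).Icc_subset_of_forall_mem_nhdsWithin hD0 hopen (Set.right_mem_Icc.2 zero_le_one)
  exact (hchain _ ⟨x, hx.1, rfl⟩ x).not_gt
    ((two_lt_rootMultiplicity_sub_C_iff (hsub (Set.right_mem_Icc.2 zero_le_one))).2 ⟨rfl, hx⟩)

/-- A tree having both a white vertex of degree ≥ 3 and a black vertex of degree ≥ 3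
is not Z-homotopic to a chain. -/
theorem not_Zhomotopic_to_chain (n : ℕ) (hn : 1 ≤ n) (p : ℝ → ℂ[X])
    (hdeg : ∀ t ∈ Set.Icc (0 : ℝ) 1, (p t).degree = n)
    (hcont : ∀ i : ℕ, ContinuousOn (fun t => (p t).coeff i) (Set.Icc (0 : ℝ) 1))
    (h0 : (criticalValues (p 0)).ncard = 2)
    (h1 : (criticalValues (p 1)).ncard = 2)
    (hmid : ∀ t ∈ Set.Ioo (0 : ℝ) 1, (criticalValues (p t)).ncard = 3)
    (α β : ℂ) (hαβ : α ≠ β) (hcv : criticalValues (p 0) = {α, β})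
    (hα : ∃ x : ℂ, 3 ≤ (p 0 - C α).rootMultiplicity x)
    (hβ : ∃ x : ℂ, 3 ≤ (p 0 - C β).rootMultiplicity x) :
    ¬ (∀ γ ∈ criticalValues (p 1), ∀ x : ℂ, (p 1 - C γ).rootMultiplicity x ≤ 2) :=
  not_Zhomotopic_to_chain_general n hn p hdeg hcont h0 hmid α β hαβ hα hβ
end

section
/- There is no Z-homotopy of degree 5 between a Chebyshev polynomial whose two fiber multiplicity multisets are both {3,1,1} and a Chebyshev polynomial whose two fiber multiplicity multisets are both {2,2,1}. Precisely: there is no map λ ↦ p_λ from [0,1] to ℂ[X] with deg p_λ = 5 for all λ and all coefficients continuous in λ, such that (i) p_0 has exactly two distinct critical values α ≠ β and the multisets of root multiplicities of p_0 − α and of p_0 − β are both {3,1,1}; (ii) p_1 has exactly two distinct critical values γ ≠ δ and the multisets of root multiplicities of p_1 − γ and of p_1 − δ are both {2,2,1}; (iii) p_λ has exactly three distinct critical values for all λ ∈ (0,1). (This is the statement that the 5-edge trees T_3 and T_5 cannot be Z-homotopic.) -/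
open Polynomial

/-- The multiset of multiplicities of the roots of `p - α` (one entry per distinct root). -/
noncomputable def fiberMults (p : ℂ[X]) (α : ℂ) : Multiset ℕ :=
  (p - C α).roots.toFinset.val.map fun x => (p - C α).rootMultiplicity x

/-!
For a quintic `q`, `q'` has four roots counted with multiplicity, so `q` has exactly three
critical values only through a single coincidence: either (A) two distinct critical points share
a critical value, or (B) `q'` has a double root. Never both, and never a triple root of `q'`:
each of these leaves at most two critical values. Along the family both conditions are closed,
once (A) is relaxed to let the two critical points merge, which produces a triple root of `q'`.
So `(0,1)` is covered by two disjoint closed sets and by connectedness lies in one of them, hence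
so does an endpoint. But at `0`, where every fiber is `{3,1,1}`, no fiber holds two multiple
points and no point has multiplicity four, which rules out relaxed (A); and at `1`, where every
fiber is `{2,2,1}`, no point has multiplicity three, which rules out (B).
-/

open Set

theorem Multiset.card_toFinset_add_le_of_le_count {α : Type*} [DecidableEq α] {m : Multiset α}
    {a : α} {k : ℕ} (h : k ≤ m.count a) : m.toFinset.card + k ≤ Multiset.card m + 1 := by
  obtain ⟨u, rfl⟩ := Multiset.le_iff_exists_add.1 (Multiset.le_count_iff_replicate_le.1 h)
  have hrep : (Multiset.replicate k a).toFinset.card ≤ 1 := by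
    rw [Multiset.toFinset_replicate]; split_ifs <;> simp
  have := Finset.card_union_le (Multiset.replicate k a).toFinset u.toFinset
  rw [Multiset.toFinset_add, Multiset.card_add, Multiset.card_replicate]
  have := u.toFinset_card_le
  omega

theorem IsPreconnected.closure_subset_or_subset_of_isClosed {X : Type*} [TopologicalSpace X]
    {s A B : Set X} (hs : IsPreconnected s) (hA : IsClosed A) (hB : IsClosed B)
    (hcover : s ⊆ A ∪ B) (hdisj : s ∩ (A ∩ B) = ∅) :
    closure s ⊆ A ∨ closure s ⊆ B := by
  have key := isPreconnected_closed_iff.1 hs A B hA hB hcover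
  rw [hdisj] at key
  by_cases hAne : (s ∩ A).Nonempty
  · refine .inl (closure_minimal (fun t ht => ?_) hA)
    exact (hcover ht).resolve_right fun htB => not_nonempty_empty (key hAne ⟨t, ht, htB⟩)
  · refine .inr (closure_minimal (fun t ht => ?_) hB)
    exact (hcover ht).resolve_left fun htA => hAne ⟨t, ht, htA⟩

theorem IsCompact.isClosed_setOf_exists {X Y E : Type*} [TopologicalSpace X] [T2Space X]
    [TopologicalSpace Y] [T2Space Y] [TopologicalSpace E] [T1Space E] {s : Set X} {K : Set Y}
    (hs : IsCompact s) (hK : IsCompact K) {f : X × Y → E} (hf : ContinuousOn f (s ×ˢ K))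
    {e : E} (hfK : ∀ a ∈ s, ∀ y, f (a, y) = e → y ∈ K) :
    IsClosed {a ∈ s | ∃ y, f (a, y) = e} := by
  have hZ : IsCompact (s ×ˢ K ∩ f ⁻¹' {e}) :=
    (hs.prod hK).of_isClosed_subset
      (hf.preimage_isClosed_of_isClosed (hs.prod hK).isClosed isClosed_singleton)
      inter_subset_left
  convert (hZ.image continuous_fst).isClosed using 1
  ext a
  constructor
  · rintro ⟨ha, y, hy⟩
    exact ⟨(a, y), ⟨⟨ha, hfK a ha y hy⟩, hy⟩, rfl⟩
  · rintro ⟨⟨a, y⟩, ⟨⟨ha, -⟩, hy⟩, rfl⟩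
    exact ⟨ha, y, hy⟩

namespace Polynomial

def HasSharedCriticalValue {R : Type*} [CommSemiring R] (q : R[X]) : Prop :=
  ∃ x y, x ≠ y ∧ q.derivative.IsRoot x ∧ q.derivative.IsRoot y ∧ q.eval x = q.eval y

section Count

variable {q : ℂ[X]}

theorem criticalValues_eq_coe_image (hq : q.derivative ≠ 0) :
    criticalValues q = ↑(q.derivative.roots.toFinset.image q.eval) := by
  ext v
  simp [criticalValues, mem_roots hq]

theorem ncard_criticalValues_le (hq : q.derivative ≠ 0) :
    (criticalValues q).ncard ≤ q.derivative.roots.toFinset.card := by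
  rw [criticalValues_eq_coe_image hq, Set.ncard_coe_finset]
  exact Finset.card_image_le

theorem ncard_criticalValues_of_not_hasSharedCriticalValue (hq : q.derivative ≠ 0)
    (hA : ¬ q.HasSharedCriticalValue) (hB : ∀ x, q.derivative.rootMultiplicity x ≤ 1) :
    (criticalValues q).ncard = q.derivative.natDegree := by
  have hnodup : q.derivative.roots.Nodup :=
    Multiset.nodup_iff_count_le_one.2 fun x => by rw [count_roots]; exact hB x
  have hinj : Set.InjOn q.eval q.derivative.roots.toFinset := by
    intro x hx y hy hxy
    by_contra hne
    simp only [Finset.mem_coe, Multiset.mem_toFinset, mem_roots hq] at hx hy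
    exact hA ⟨x, y, hne, hx, hy, hxy⟩
  rw [criticalValues_eq_coe_image hq, Set.ncard_coe_finset, Finset.card_image_of_injOn hinj,
    Multiset.toFinset_card_of_nodup hnodup, IsAlgClosed.card_roots_eq_natDegree]

theorem ncard_criticalValues_add_two_le_of_le_rootMultiplicity (hq : q.derivative ≠ 0) {x : ℂ}
    (hx : 3 ≤ q.derivative.rootMultiplicity x) :
    (criticalValues q).ncard + 2 ≤ q.derivative.natDegree := by
  have := Multiset.card_toFinset_add_le_of_le_count (count_roots q.derivative ▸ hx)
  rw [IsAlgClosed.card_roots_eq_natDegree] at this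
  have := ncard_criticalValues_le hq
  omega

theorem HasSharedCriticalValue.ncard_criticalValues_add_two_le (hA : q.HasSharedCriticalValue)
    (hq : q.derivative ≠ 0) {x : ℂ} (hx : 2 ≤ q.derivative.rootMultiplicity x) :
    (criticalValues q).ncard + 2 ≤ q.derivative.natDegree := by
  obtain ⟨y, z, hyz, hy, hz, hval⟩ := hA
  have hlt :
      (q.derivative.roots.toFinset.image q.eval).card < q.derivative.roots.toFinset.card := by
    refine lt_of_le_of_ne Finset.card_image_le fun h => hyz ?_
    refine Finset.card_image_iff.1 h ?_ ?_ hval <;> simpa [mem_roots hq]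
  have := Multiset.card_toFinset_add_le_of_le_count (count_roots q.derivative ▸ hx)
  rw [IsAlgClosed.card_roots_eq_natDegree] at this
  rw [criticalValues_eq_coe_image hq, Set.ncard_coe_finset]
  omega

end Count

section Fiber

variable {q : ℂ[X]}

theorem sub_C_ne_zero_of_derivative_ne_zero (hq : q.derivative ≠ 0) (c : ℂ) : q - C c ≠ 0 :=
  fun h => hq (by simpa using congrArg derivative h)

theorem rootMultiplicity_sub_C_eval (hq : q.derivative ≠ 0) (x : ℂ) :
    (q - C (q.eval x)).rootMultiplicity x = q.derivative.rootMultiplicity x + 1 := by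
  have hne := sub_C_ne_zero_of_derivative_ne_zero hq (q.eval x)
  have hroot : (q - C (q.eval x)).IsRoot x := by simp
  have hpos := (rootMultiplicity_pos hne).2 hroot
  have := derivative_rootMultiplicity_of_root hroot
  rw [derivative_sub, derivative_C, sub_zero] at this
  omega

theorem rootMultiplicity_mem_fiberMults (hq : q.derivative ≠ 0) (x : ℂ) :
    q.derivative.rootMultiplicity x + 1 ∈ fiberMults q (q.eval x) := by
  rw [← rootMultiplicity_sub_C_eval hq]
  exact Multiset.mem_map_of_mem _
    (by simp [mem_roots (sub_C_ne_zero_of_derivative_ne_zero hq _)])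

theorem HasSharedCriticalValue.exists_two_le_countP_fiberMults (hA : q.HasSharedCriticalValue)
    (hq : q.derivative ≠ 0) :
    ∃ a ∈ criticalValues q, 2 ≤ (fiberMults q a).countP (2 ≤ ·) := by
  obtain ⟨x, y, hxy, hx, hy, hval⟩ := hA
  refine ⟨q.eval x, ⟨x, hx, rfl⟩, ?_⟩
  have hne := sub_C_ne_zero_of_derivative_ne_zero hq (q.eval x)
  have hmem : ∀ z, q.derivative.IsRoot z → q.eval z = q.eval x →
      z ∈ (q - C (q.eval x)).roots.toFinset.filter
        fun z => 2 ≤ (q - C (q.eval x)).rootMultiplicity z := by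
    intro z hz hzx
    rw [Finset.mem_filter, Multiset.mem_toFinset, mem_roots hne, ← hzx,
      rootMultiplicity_sub_C_eval hq]
    exact ⟨by simp, by have := (rootMultiplicity_pos hq).2 hz; omega⟩
  rw [fiberMults, Multiset.countP_map, ← Finset.filter_val, Finset.card_val]
  exact (Finset.card_pair hxy).symm.le.trans <| Finset.card_le_card <|
    Finset.insert_subset (hmem x hx rfl) (Finset.singleton_subset_iff.2 (hmem y hy hval.symm))

end Fiber

section TaylorRemainder

variable {R : Type*} [CommRing R] (q : R[X]) (x : R)

noncomputable def taylorRemainder : R[X] := (taylor x q).divX.divX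

theorem coeff_taylorRemainder (n : ℕ) :
    (q.taylorRemainder x).coeff n = (taylor x q).coeff (n + 2) := by
  simp [taylorRemainder, coeff_divX]

theorem taylor_eq_taylorRemainder :
    taylor x q = C (q.eval x) + C (q.derivative.eval x) * X + X ^ 2 * q.taylorRemainder x := by
  have h1 := divX_mul_X_add (taylor x q)
  have h2 := divX_mul_X_add (taylor x q).divX
  rw [taylor_coeff_zero] at h1
  rw [coeff_divX, taylor_coeff_one] at h2
  conv_lhs => rw [← h1, ← h2]
  rw [taylorRemainder]
  ring

theorem taylor_derivative : taylor x q.derivative = derivative (taylor x q) := by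
  simp [taylor_apply, derivative_comp]

theorem eval_add_eq_taylorRemainder (h : R) :
    q.eval (h + x) =
      q.eval x + q.derivative.eval x * h + h ^ 2 * (q.taylorRemainder x).eval h := by
  rw [← taylor_eval, taylor_eq_taylorRemainder]
  simp only [eval_add, eval_mul, eval_C, eval_X, eval_pow]

theorem derivative_eval_add_eq_taylorRemainder (h : R) :
    q.derivative.eval (h + x) = q.derivative.eval x + 2 * h * (q.taylorRemainder x).eval h
      + h ^ 2 * (q.taylorRemainder x).derivative.eval h := by
  rw [← taylor_eval, taylor_derivative, taylor_eq_taylorRemainder]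
  simp only [derivative_add, derivative_mul, derivative_C, derivative_X, derivative_X_pow,
    eval_add, eval_mul, eval_C, eval_X, eval_pow, eval_zero, eval_one]
  push_cast
  ring

theorem natDegree_taylorRemainder_le : (q.taylorRemainder x).natDegree ≤ q.natDegree :=
  natDegree_divX_le.trans (natDegree_divX_le.trans (natDegree_taylor q x).le)

end TaylorRemainder

section Collision

variable {R : Type*} [CommRing R] {q : R[X]} {x h : R}

/-- For `h ≠ 0` this says that `x` and `x + h` are critical points with the same value; for
`h = 0` that `x` is a root of `q'` of multiplicity at least three. Unlike the first condition
alone, it is closed in `(q, x, h)`. -/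
def CriticalCollision (q : R[X]) (x h : R) : Prop :=
  q.derivative.IsRoot x ∧ (q.taylorRemainder x).IsRoot h ∧
    (q.taylorRemainder x).derivative.IsRoot h

theorem CriticalCollision.isRoot_derivative_add (hc : CriticalCollision q x h) :
    q.derivative.IsRoot (h + x) := by
  obtain ⟨h0, h1, h2⟩ := hc
  simp only [IsRoot.def] at h0 h1 h2 ⊢
  rw [derivative_eval_add_eq_taylorRemainder, h0, h1, h2]
  ring

theorem HasSharedCriticalValue.exists_criticalCollision [IsDomain R]
    (hA : q.HasSharedCriticalValue) : ∃ x h, CriticalCollision q x h := by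
  obtain ⟨x, y, hxy, hx, hy, hval⟩ := hA
  have hh : y - x ≠ 0 := sub_ne_zero.2 hxy.symm
  have hy' : y = (y - x) + x := by ring
  have hU : (q.taylorRemainder x).IsRoot (y - x) := by
    have := q.eval_add_eq_taylorRemainder x (y - x)
    rw [← hy', ← hval, hx.eq_zero] at this
    simpa [hh] using this
  refine ⟨x, y - x, hx, hU, ?_⟩
  have := q.derivative_eval_add_eq_taylorRemainder x (y - x)
  rw [← hy', hy.eq_zero, hx.eq_zero, hU.eq_zero] at this
  simpa [hh] using this

theorem CriticalCollision.hasSharedCriticalValue_or_le_rootMultiplicity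
    (hc : CriticalCollision q x h) (hq : q.derivative ≠ 0) :
    q.HasSharedCriticalValue ∨ 3 ≤ q.derivative.rootMultiplicity x := by
  rcases eq_or_ne h 0 with rfl | hh
  · right
    obtain ⟨h0, h1, h2⟩ := hc
    rw [rootMultiplicity_eq_natTrailingDegree, ← taylor_apply, taylor_derivative]
    refine le_natTrailingDegree (by rwa [← taylor_derivative, Ne, taylor_eq_zero]) fun m hm => ?_
    have c1 : (taylor x q).coeff 1 = 0 := by rwa [taylor_coeff_one]
    have c2 : (taylor x q).coeff 2 = 0 := by
      rwa [← coeff_taylorRemainder, coeff_zero_eq_eval_zero]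
    have c3 : (taylor x q).coeff 3 = 0 := by
      simpa [← coeff_zero_eq_eval_zero, coeff_derivative, coeff_taylorRemainder] using h2
    interval_cases m <;> simp [coeff_derivative, c1, c2, c3]
  · left
    refine ⟨h + x, x, by simpa using hh, hc.isRoot_derivative_add, hc.1, ?_⟩
    rw [eval_add_eq_taylorRemainder, hc.1.eq_zero, hc.2.1.eq_zero]
    ring

end Collision

section ContinuousCoefficients

variable {α : Type*} [TopologicalSpace α]

def CoeffContinuousOn {R : Type*} [Semiring R] [TopologicalSpace R] (f : α → R[X]) (s : Set α) :
    Prop :=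
  ∀ n, ContinuousOn (fun a => (f a).coeff n) s

namespace CoeffContinuousOn

variable {R : Type*} [CommSemiring R] [TopologicalSpace R] {f : α → R[X]} {s : Set α}

theorem comp {β : Type*} [TopologicalSpace β] {g : β → α} {t : Set β}
    (hf : CoeffContinuousOn f s) (hg : ContinuousOn g t) (hgt : MapsTo g t s) :
    CoeffContinuousOn (f ∘ g) t :=
  fun n => (hf n).comp hg hgt

protected theorem divX (hf : CoeffContinuousOn f s) : CoeffContinuousOn (fun a => (f a).divX) s :=
  fun n => by simpa only [coeff_divX] using hf (n + 1)

variable [IsTopologicalSemiring R]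

protected theorem derivative (hf : CoeffContinuousOn f s) :
    CoeffContinuousOn (fun a => derivative (f a)) s := fun n => by
  simp only [coeff_derivative]
  exact (hf (n + 1)).mul continuousOn_const

protected theorem hasseDeriv (hf : CoeffContinuousOn f s) (k : ℕ) :
    CoeffContinuousOn (fun a => hasseDeriv k (f a)) s := fun n => by
  simp only [hasseDeriv_coeff]
  exact continuousOn_const.mul (hf (n + k))

protected theorem eval (hf : CoeffContinuousOn f s) {N : ℕ}
    (hN : ∀ a ∈ s, (f a).natDegree ≤ N) {x : α → R} (hx : ContinuousOn x s) :
    ContinuousOn (fun a => (f a).eval (x a)) s := by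
  refine ContinuousOn.congr (f := fun a => ∑ i ∈ Finset.range (N + 1), (f a).coeff i * x a ^ i)
    (continuousOn_finsetSum _ fun i _ => (hf i).mul (hx.pow i)) fun a ha => ?_
  exact eval_eq_sum_range' (Nat.lt_succ_of_le (hN a ha)) _

protected theorem taylor (hf : CoeffContinuousOn f s) {N : ℕ}
    (hN : ∀ a ∈ s, (f a).natDegree ≤ N) {x : α → R} (hx : ContinuousOn x s) :
    CoeffContinuousOn (fun a => taylor (x a) (f a)) s := fun n => by
  simp only [taylor_coeff]
  exact (hf.hasseDeriv n).eval
    (fun a ha => (natDegree_hasseDeriv_le _ _).trans (tsub_le_self.trans (hN a ha))) hx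

protected theorem taylorRemainder {R : Type*} [CommRing R] [TopologicalSpace R]
    [IsTopologicalRing R] {f : α → R[X]} (hf : CoeffContinuousOn f s) {N : ℕ}
    (hN : ∀ a ∈ s, (f a).natDegree ≤ N) {x : α → R} (hx : ContinuousOn x s) :
    CoeffContinuousOn (fun a => (f a).taylorRemainder (x a)) s :=
  (hf.taylor hN hx).divX.divX

theorem exists_bound_of_isRoot {K : Type*} [NormedField K] {f : α → K[X]}
    (hf : CoeffContinuousOn f s) (hs : IsCompact s) {n : ℕ}
    (hdeg : ∀ a ∈ s, (f a).natDegree = n) (hne : ∀ a ∈ s, f a ≠ 0) :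
    ∃ R : ℝ, ∀ a ∈ s, ∀ z, (f a).IsRoot z → ‖z‖ ≤ R := by
  have hlc : ∀ a ∈ s, (f a).coeff n ≠ 0 := fun a ha => by
    rw [← hdeg a ha]; exact leadingCoeff_ne_zero.2 (hne a ha)
  set g : α → ℝ :=
    fun a => (∑ i ∈ Finset.range n, ‖(f a).coeff i‖) / ‖(f a).coeff n‖ + 1
  have hg : ContinuousOn g s :=
    ((continuousOn_finsetSum _ fun i _ => (hf i).norm).div (hf n).norm
      fun a ha => norm_ne_zero_iff.2 (hlc a ha)).add continuousOn_const
  obtain ⟨R, hR⟩ := hs.bddAbove_image hg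
  refine ⟨R, fun a ha z hz => ?_⟩
  have hcb : (cauchyBound (f a) : ℝ) ≤ g a := by
    simp only [cauchyBound, hdeg a ha, leadingCoeff, NNReal.coe_add, NNReal.coe_div,
      NNReal.coe_one, coe_nnnorm, g]
    gcongr
    have : (Finset.range n).sup (fun i => ‖(f a).coeff i‖₊)
        ≤ ∑ i ∈ Finset.range n, ‖(f a).coeff i‖₊ := Finset.sup_le fun i hi =>
      Finset.single_le_sum (f := fun i => ‖(f a).coeff i‖₊) (fun _ _ => zero_le) hi
    simpa only [← coe_nnnorm, ← NNReal.coe_sum] using NNReal.coe_le_coe.mpr this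
  have hz' : ‖z‖ < cauchyBound (f a) := by exact_mod_cast hz.norm_lt_cauchyBound (hne a ha)
  exact hz'.le.trans (hcb.trans (hR ⟨a, ha, rfl⟩))

end CoeffContinuousOn

end ContinuousCoefficients

section ClosedConditions

theorem natDegree_derivative_le_self {R : Type*} [Semiring R] (q : R[X]) :
    q.derivative.natDegree ≤ q.natDegree :=
  (natDegree_derivative_le q).trans tsub_le_self

variable {X : Type*} [TopologicalSpace X] {s : Set X} {p : X → ℂ[X]} {n : ℕ}

theorem CoeffContinuousOn.exists_bound_isRoot_derivative (hp : CoeffContinuousOn p s)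
    (hs : IsCompact s) (hdeg : ∀ a ∈ s, (p a).natDegree = n) (hn : n ≠ 0) :
    ∃ R : ℝ, ∀ a ∈ s, ∀ x, (p a).derivative.IsRoot x → ‖x‖ ≤ R :=
  hp.derivative.exists_bound_of_isRoot hs (fun a ha => by rw [natDegree_derivative, hdeg a ha])
    fun a ha => derivative_ne_zero.2 (by rw [hdeg a ha]; exact hn)

theorem CoeffContinuousOn.isClosed_setOf_two_le_rootMultiplicity_derivative [T2Space X]
    (hp : CoeffContinuousOn p s) (hs : IsCompact s) (hdeg : ∀ a ∈ s, (p a).natDegree = n)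
    (hn : n ≠ 0) : IsClosed {a ∈ s | ∃ x, 2 ≤ (p a).derivative.rootMultiplicity x} := by
  obtain ⟨R, hR⟩ := hp.exists_bound_isRoot_derivative hs hdeg hn
  have hg : CoeffContinuousOn (fun z : X × ℂ => p z.1) (s ×ˢ Metric.closedBall 0 R) :=
    hp.comp continuousOn_fst fun z hz => hz.1
  have hN : ∀ z ∈ s ×ˢ Metric.closedBall (0 : ℂ) R, (p z.1).derivative.natDegree ≤ n :=
    fun z hz => (natDegree_derivative_le_self _).trans (hdeg z.1 hz.1).le
  have hf : ContinuousOn (fun z : X × ℂ =>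
      ((p z.1).derivative.eval z.2, (p z.1).derivative.derivative.eval z.2))
      (s ×ˢ Metric.closedBall 0 R) :=
    (hg.derivative.eval hN continuousOn_snd).prodMk (hg.derivative.derivative.eval
      (fun z hz => (natDegree_derivative_le_self _).trans (hN z hz)) continuousOn_snd)
  convert hs.isClosed_setOf_exists (isCompact_closedBall 0 R) hf (e := 0)
    (fun a ha x hx => mem_closedBall_zero_iff.2 (hR a ha x (Prod.mk_eq_zero.1 hx).1)) using 1
  ext a
  refine and_congr_right fun ha => exists_congr fun x => ?_
  rw [Prod.mk_eq_zero, ← IsRoot.def, ← IsRoot.def, ← one_lt_rootMultiplicity_iff_isRoot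
    (derivative_ne_zero.2 (by rw [hdeg a ha]; exact hn))]
  rfl

theorem CoeffContinuousOn.isClosed_setOf_criticalCollision [T2Space X]
    (hp : CoeffContinuousOn p s) (hs : IsCompact s) (hdeg : ∀ a ∈ s, (p a).natDegree = n)
    (hn : n ≠ 0) : IsClosed {a ∈ s | ∃ x h, CriticalCollision (p a) x h} := by
  obtain ⟨R, hR⟩ := hp.exists_bound_isRoot_derivative hs hdeg hn
  set K := Metric.closedBall (0 : ℂ) R ×ˢ Metric.closedBall (0 : ℂ) (2 * R)
  have hg : CoeffContinuousOn (fun z : X × ℂ × ℂ => p z.1) (s ×ˢ K) :=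
    hp.comp continuousOn_fst fun z hz => hz.1
  have hN : ∀ z ∈ s ×ˢ K, (p z.1).natDegree ≤ n := fun z hz => (hdeg z.1 hz.1).le
  have hU := hg.taylorRemainder hN continuous_snd.fst.continuousOn
  have hNU : ∀ z ∈ s ×ˢ K, ((p z.1).taylorRemainder z.2.1).natDegree ≤ n :=
    fun z hz => (natDegree_taylorRemainder_le _ _).trans (hN z hz)
  have hf : ContinuousOn (fun z : X × ℂ × ℂ => ((p z.1).derivative.eval z.2.1,
      ((p z.1).taylorRemainder z.2.1).eval z.2.2,
      ((p z.1).taylorRemainder z.2.1).derivative.eval z.2.2)) (s ×ˢ K) :=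
    (hg.derivative.eval (fun z hz => (natDegree_derivative_le_self _).trans (hN z hz))
      continuous_snd.fst.continuousOn).prodMk
    ((hU.eval hNU continuous_snd.snd.continuousOn).prodMk (hU.derivative.eval
      (fun z hz => (natDegree_derivative_le_self _).trans (hNU z hz))
      continuous_snd.snd.continuousOn))
  convert hs.isClosed_setOf_exists ((isCompact_closedBall 0 R).prod (isCompact_closedBall 0 _)) hf
    (e := 0) ?_ using 1
  · ext a
    simp only [Prod.exists, Prod.mk_eq_zero, CriticalCollision, IsRoot.def]
  · rintro a ha ⟨x, h⟩ hxh
    simp only [Prod.mk_eq_zero] at hxh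
    have hx := hR a ha x hxh.1
    have hhx := hR a ha _ (CriticalCollision.isRoot_derivative_add hxh)
    refine ⟨mem_closedBall_zero_iff.2 hx, mem_closedBall_zero_iff.2 ?_⟩
    calc ‖h‖ = ‖(h + x) - x‖ := by rw [add_sub_cancel_right]
      _ ≤ ‖h + x‖ + ‖x‖ := norm_sub_le _ _
      _ ≤ 2 * R := by linarith

end ClosedConditions

section Endpoints

variable {q : ℂ[X]}

theorem not_criticalCollision_of_forall_fiberMults_eq_311 (hq : q.derivative ≠ 0)
    (hfib : ∀ a ∈ criticalValues q, fiberMults q a = {3, 1, 1}) (x h : ℂ) :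
    ¬ CriticalCollision q x h := by
  intro hc
  rcases hc.hasSharedCriticalValue_or_le_rootMultiplicity hq with hA | hx
  · obtain ⟨a, ha, hcount⟩ := hA.exists_two_le_countP_fiberMults hq
    rw [hfib a ha] at hcount
    exact absurd hcount (by decide)
  · have hmem := rootMultiplicity_mem_fiberMults hq x
    rw [hfib _ ⟨x, (rootMultiplicity_pos hq).1 (by omega), rfl⟩] at hmem
    simp only [Multiset.insert_eq_cons, Multiset.mem_cons, Multiset.mem_singleton] at hmem
    omega

theorem rootMultiplicity_derivative_le_one_of_forall_fiberMults_eq_221 (hq : q.derivative ≠ 0)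
    (hfib : ∀ a ∈ criticalValues q, fiberMults q a = {2, 2, 1}) (x : ℂ) :
    q.derivative.rootMultiplicity x ≤ 1 := by
  by_contra! hx
  have hmem := rootMultiplicity_mem_fiberMults hq x
  rw [hfib _ ⟨x, (rootMultiplicity_pos hq).1 (by omega), rfl⟩] at hmem
  simp only [Multiset.insert_eq_cons, Multiset.mem_cons, Multiset.mem_singleton] at hmem
  omega

theorem exists_criticalCollision_or_two_le_rootMultiplicity (hq : q.derivative ≠ 0)
    (hcard : (criticalValues q).ncard + 1 = q.derivative.natDegree) :
    (∃ x h, CriticalCollision q x h) ∨ ∃ x, 2 ≤ q.derivative.rootMultiplicity x := by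
  by_contra! hne
  have := ncard_criticalValues_of_not_hasSharedCriticalValue hq
    (fun hA => have ⟨x, h, hc⟩ := hA.exists_criticalCollision; hne.1 x h hc)
    fun x => Nat.lt_succ_iff.1 (hne.2 x)
  omega

theorem CriticalCollision.rootMultiplicity_derivative_lt_two {x h : ℂ}
    (hc : CriticalCollision q x h) (hq : q.derivative ≠ 0)
    (hcard : (criticalValues q).ncard + 1 = q.derivative.natDegree) (y : ℂ) :
    q.derivative.rootMultiplicity y < 2 := by
  by_contra! hy
  rcases hc.hasSharedCriticalValue_or_le_rootMultiplicity hq with hA | hx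
  · have := hA.ncard_criticalValues_add_two_le hq hy
    omega
  · have := ncard_criticalValues_add_two_le_of_le_rootMultiplicity hq hx
    omega

end Endpoints

end Polynomial

/-- The 5-edge plane trees `T₃` (both fiber multiplicity multisets `{3,1,1}`)
and `T₅` (both fiber multiplicity multisets `{2,2,1}`) are not Z-homotopic. -/
theorem T3_T5_not_Zhomotopic :
    ¬ ∃ p : ℝ → ℂ[X],
      (∀ t ∈ Set.Icc (0 : ℝ) 1, (p t).degree = 5) ∧
      (∀ i : ℕ, ContinuousOn (fun t => (p t).coeff i) (Set.Icc (0 : ℝ) 1)) ∧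
      (∃ α β : ℂ, α ≠ β ∧ criticalValues (p 0) = {α, β} ∧
        fiberMults (p 0) α = {3, 1, 1} ∧ fiberMults (p 0) β = {3, 1, 1}) ∧
      (∃ γ δ : ℂ, γ ≠ δ ∧ criticalValues (p 1) = {γ, δ} ∧
        fiberMults (p 1) γ = {2, 2, 1} ∧ fiberMults (p 1) δ = {2, 2, 1}) ∧
      (∀ t ∈ Set.Ioo (0 : ℝ) 1, (criticalValues (p t)).ncard = 3) := by
  rintro ⟨p, hdeg, hcont, ⟨α, β, -, hcv0, hα, hβ⟩, ⟨γ, δ, -, hcv1, hγ, hδ⟩, hthree⟩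
  have hnat : ∀ t ∈ Icc (0 : ℝ) 1, (p t).natDegree = 5 :=
    fun t ht => natDegree_eq_of_degree_eq_some (hdeg t ht)
  have hder : ∀ t ∈ Icc (0 : ℝ) 1, (p t).derivative ≠ 0 :=
    fun t ht => derivative_ne_zero.2 (by rw [hnat t ht]; norm_num)
  have hcard : ∀ t ∈ Ioo (0 : ℝ) 1,
      (criticalValues (p t)).ncard + 1 = (p t).derivative.natDegree := fun t ht => by
    rw [natDegree_derivative, hnat t (Ioo_subset_Icc_self ht), hthree t ht]
  set A := {t ∈ Icc (0 : ℝ) 1 | ∃ x h, CriticalCollision (p t) x h}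
  set B := {t ∈ Icc (0 : ℝ) 1 | ∃ x, 2 ≤ (p t).derivative.rootMultiplicity x}
  have hcover : Ioo (0 : ℝ) 1 ⊆ A ∪ B := fun t ht =>
    (exists_criticalCollision_or_two_le_rootMultiplicity (hder t (Ioo_subset_Icc_self ht))
      (hcard t ht)).imp (⟨Ioo_subset_Icc_self ht, ·⟩) (⟨Ioo_subset_Icc_self ht, ·⟩)
  have hdisj : Ioo (0 : ℝ) 1 ∩ (A ∩ B) = ∅ := by
    refine eq_empty_of_forall_notMem fun t ⟨ht, ⟨_, x, h, hc⟩, ⟨_, y, hy⟩⟩ => ?_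
    have := hc.rootMultiplicity_derivative_lt_two (hder t (Ioo_subset_Icc_self ht)) (hcard t ht) y
    omega
  have h0 : (0 : ℝ) ∈ Icc 0 1 := left_mem_Icc.2 zero_le_one
  have h1 : (1 : ℝ) ∈ Icc 0 1 := right_mem_Icc.2 zero_le_one
  rcases isPreconnected_Ioo.closure_subset_or_subset_of_isClosed
    (CoeffContinuousOn.isClosed_setOf_criticalCollision hcont isCompact_Icc hnat (by norm_num))
    (CoeffContinuousOn.isClosed_setOf_two_le_rootMultiplicity_derivative hcont isCompact_Icc hnat
      (by norm_num)) hcover hdisj with hA | hB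
  · obtain ⟨-, x, h, hc⟩ := hA (closure_Ioo (zero_ne_one (α := ℝ)) ▸ h0)
    exact not_criticalCollision_of_forall_fiberMults_eq_311 (hder 0 h0)
      (by rw [hcv0]; rintro a (rfl | rfl) <;> assumption) x h hc
  · obtain ⟨-, x, hx⟩ := hB (closure_Ioo (zero_ne_one (α := ℝ)) ▸ h1)
    have := rootMultiplicity_derivative_le_one_of_forall_fiberMults_eq_221 (hder 1 h1)
      (by rw [hcv1]; rintro a (rfl | rfl) <;> assumption) x
    omega
end

section
/- Let n ≥ 1 and let λ ↦ p_λ be a map from the open interval (0,1) to ℂ[X] such that deg p_λ = n for all λ, each coefficient of p_λ is a continuous function of λ, and each p_λ has exactly three distinct critical values. For λ ∈ (0,1) define Passport(λ) to be the multiset, taken over the three distinct critical values α of p_λ, of the multisets of root multiplicities of p_λ − α (so Passport(λ) is a multiset of three multisets of natural numbers). Then Passport(λ) is the same for all λ ∈ (0,1). -/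
open Polynomial

noncomputable def passport (p : ℂ[X]) : Multiset (Multiset ℕ) :=
  (p.derivative.roots.toFinset.image fun x => p.eval x).val.map fun α => fiberMults p α

/-!
The passport is locally constant in `t`, hence constant on the connected interval `(0, 1)`.
Let `q k → Q` coefficientwise, with constant degree `n ≥ 1` and as many critical values as `Q`.
A root of `Q` attracts roots of the `q k`. Applied to `Q'`, this makes every critical value `α`
of `Q` a limit of critical values `β k` of `q k`, and by counting `α ↦ β k` is eventually a
bijection; applied to `Q - α`, it shows that `q k - β k` eventually has at least as many
distinct roots as `Q - α`. But for every `p` of degree `n`, `∑ (n - #{distinct roots of p - β})`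
over its critical values `β` equals `n - 1`, so no fibre gains distinct roots. Since root
multiplicities are upper semicontinuous and add up to `n` in every fibre, they are preserved.
-/

open Filter Topology Finset

section TendstoCoeffwise

variable {R ι : Type*} [CommRing R] [TopologicalSpace R]

def TendstoCoeffwise (q : ι → R[X]) (l : Filter ι) (Q : R[X]) : Prop :=
  ∀ i, Tendsto (fun k => (q k).coeff i) l (𝓝 (Q.coeff i))

variable [IsTopologicalRing R] {q : ι → R[X]} {l : Filter ι} {Q : R[X]}

theorem TendstoCoeffwise.tendsto_eval (hc : TendstoCoeffwise q l Q) {d : ℕ}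
    (hq : ∀ᶠ k in l, (q k).natDegree ≤ d) (hQ : Q.natDegree ≤ d) {z : ι → R} {w : R}
    (hz : Tendsto z l (𝓝 w)) : Tendsto (fun k => (q k).eval (z k)) l (𝓝 (Q.eval w)) := by
  rw [eval_eq_sum_range' (Nat.lt_succ_of_le hQ)]
  refine Tendsto.congr' ?_ (tendsto_finsetSum _ fun i _ => (hc i).mul (hz.pow i))
  filter_upwards [hq] with k hk
  rw [eval_eq_sum_range' (Nat.lt_succ_of_le hk)]

theorem TendstoCoeffwise.iterate_derivative (hc : TendstoCoeffwise q l Q) (m : ℕ) :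
    TendstoCoeffwise (fun k => derivative^[m] (q k)) l (derivative^[m] Q) := by
  intro i
  simp only [coeff_iterate_derivative, nsmul_eq_mul]
  exact tendsto_const_nhds.mul (hc (i + m))

theorem TendstoCoeffwise.derivative (hc : TendstoCoeffwise q l Q) :
    TendstoCoeffwise (fun k => derivative (q k)) l (derivative Q) :=
  hc.iterate_derivative 1

theorem TendstoCoeffwise.sub_C (hc : TendstoCoeffwise q l Q) {β : ι → R} {α : R}
    (hβ : Tendsto β l (𝓝 α)) : TendstoCoeffwise (fun k => q k - C (β k)) l (Q - C α) := by
  intro i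
  simp only [coeff_sub, coeff_C]
  split_ifs
  · exact (hc i).sub hβ
  · simpa using hc i

end TendstoCoeffwise

section Selection

variable {ι X : Type*} {l : Filter ι}

theorem exists_tendsto_of_forall_eventually_exists_dist_lt [PseudoMetricSpace X]
    {s : ι → Finset X} {a : X} (h : ∀ ε > 0, ∀ᶠ k in l, ∃ b ∈ s k, dist b a < ε) :
    ∃ b : ι → X, (∀ᶠ k in l, b k ∈ s k) ∧ Tendsto b l (𝓝 a) := by
  choose b hbs hb using fun k (hk : (s k).Nonempty) => (s k).exists_min_image (dist · a) hk
  have hne : ∀ᶠ k in l, (s k).Nonempty := (h 1 one_pos).mono fun k ⟨c, hc, _⟩ => ⟨c, hc⟩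
  refine ⟨fun k => if hk : (s k).Nonempty then b k hk else a, hne.mono fun k hk => ?_,
    Metric.tendsto_nhds.mpr fun ε hε => ?_⟩
  · simpa [hk] using hbs k hk
  filter_upwards [h ε hε, hne] with k ⟨c, hc, hca⟩ hk
  simpa [hk] using (hb k hk c hc).trans_lt hca

theorem exists_mapsTo_injOn_of_forall_exists_tendsto [TopologicalSpace X] [T2Space X]
    {t : Finset X} {s : ι → Set X}
    (h : ∀ a ∈ t, ∃ b : ι → X, (∀ᶠ k in l, b k ∈ s k) ∧ Tendsto b l (𝓝 a)) :
    ∃ B : X → ι → X, (∀ a ∈ t, Tendsto (B a) l (𝓝 a)) ∧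
      ∀ᶠ k in l, Set.MapsTo (B · k) t (s k) ∧ Set.InjOn (B · k) t := by
  classical
  choose B hBs hB using h
  set B' : X → ι → X := fun a k => if ha : a ∈ t then B a ha k else a
  have hB's : ∀ a ∈ t, ∀ᶠ k in l, B' a k ∈ s k := fun a ha => by simpa [B', ha] using hBs a ha
  have hB' : ∀ a ∈ t, Tendsto (B' a) l (𝓝 a) := fun a ha => by simpa [B', ha] using hB a ha
  have hne : ∀ a ∈ t, ∀ a' ∈ t, a ≠ a' → ∀ᶠ k in l, B' a k ≠ B' a' k := fun a ha a' ha' haa' =>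
    ((hB' a ha).prodMk_nhds (hB' a' ha')).eventually
      (isClosed_diagonal.isOpen_compl.mem_nhds haa')
  refine ⟨B', hB', ?_⟩
  filter_upwards [(eventually_all_finset t).mpr hB's,
    (eventually_all_finset t).mpr fun a ha => (eventually_all_finset t).mpr fun a' ha' =>
      eventually_imp_distrib_left.mpr fun haa' => hne a ha a' ha' haa'] with k hks hkinj
  refine ⟨fun a ha => hks a ha, fun a ha a' ha' hBa => ?_⟩
  by_contra haa'
  exact hkinj a ha a' ha' haa' hBa

end Selection

section RootCounting

variable {K : Type*} [Field K]

theorem card_roots_toFinset_le_natDegree [DecidableEq K] (p : K[X]) :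
    #p.roots.toFinset ≤ p.natDegree :=
  (Multiset.toFinset_card_le _).trans (card_roots' p)

theorem sum_rootMultiplicity_roots_toFinset [IsAlgClosed K] [DecidableEq K] (p : K[X]) :
    ∑ a ∈ p.roots.toFinset, p.rootMultiplicity a = p.natDegree := by
  simp_rw [← count_roots]
  rw [Multiset.toFinset_sum_count_eq, IsAlgClosed.card_roots_eq_natDegree]

theorem sub_C_ne_zero {p : K[X]} (hp : 0 < p.natDegree) (β : K) : p - C β ≠ 0 :=
  ne_zero_of_natDegree_gt (n := 0) (by rwa [natDegree_sub_C])

variable [DecidableEq K]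

noncomputable def criticalValueFinset (p : K[X]) : Finset K :=
  p.derivative.roots.toFinset.image fun x => p.eval x

variable [IsAlgClosed K] [CharZero K]

theorem sum_rootMultiplicity_derivative_roots_sub_C {p : K[X]} (hp : 0 < p.natDegree) (β : K) :
    ∑ a ∈ (p - C β).roots.toFinset, p.derivative.rootMultiplicity a =
      p.natDegree - #(p - C β).roots.toFinset := by
  have hne := sub_C_ne_zero hp β
  have hroot : ∀ a ∈ (p - C β).roots.toFinset, (p - C β).IsRoot a := fun a ha =>
    (mem_roots hne).mp (Multiset.mem_toFinset.mp ha)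
  calc ∑ a ∈ (p - C β).roots.toFinset, p.derivative.rootMultiplicity a
      = ∑ a ∈ (p - C β).roots.toFinset, ((p - C β).rootMultiplicity a - 1) :=
        sum_congr rfl fun a ha => by
          rw [← derivative_rootMultiplicity_of_root (hroot a ha), derivative_sub, derivative_C,
            sub_zero]
    _ = p.natDegree - #(p - C β).roots.toFinset := by
        rw [sum_tsub_distrib _ fun a ha => (rootMultiplicity_pos hne).mpr (hroot a ha),
          sum_rootMultiplicity_roots_toFinset, natDegree_sub_C, card_eq_sum_ones]

/-- Each root of `p'` of order `m` lies in exactly one fibre `p - β`, where it is a root of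
order `m + 1`. -/
theorem sum_natDegree_sub_card_roots_sub_C {p : K[X]} (hp : 0 < p.natDegree) :
    ∑ β ∈ criticalValueFinset p, (p.natDegree - #(p - C β).roots.toFinset) =
      p.natDegree - 1 := by
  set S := p.derivative.roots.toFinset
  calc ∑ β ∈ criticalValueFinset p, (p.natDegree - #(p - C β).roots.toFinset)
      = ∑ β ∈ criticalValueFinset p, ∑ a ∈ (p - C β).roots.toFinset,
          p.derivative.rootMultiplicity a :=
        sum_congr rfl fun β _ => (sum_rootMultiplicity_derivative_roots_sub_C hp β).symm
    _ = ∑ β ∈ criticalValueFinset p, ∑ a ∈ S with p.eval a = β,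
          p.derivative.rootMultiplicity a := by
        refine sum_congr rfl fun β _ => (sum_subset (fun a ha => ?_) fun a ha haS => ?_).symm
        · obtain ⟨-, rfl⟩ := mem_filter.mp ha
          exact Multiset.mem_toFinset.mpr ((mem_roots (sub_C_ne_zero hp _)).mpr (by simp))
        · have hβ : p.eval a = β := by
            simpa [sub_eq_zero] using
              (mem_roots (sub_C_ne_zero hp β)).mp (Multiset.mem_toFinset.mp ha)
          refine rootMultiplicity_eq_zero_iff.mpr fun hroot => ?_
          by_contra hder
          exact haS (mem_filter.mpr
            ⟨Multiset.mem_toFinset.mpr (mem_roots'.mpr ⟨hder, hroot⟩), hβ⟩)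
    _ = ∑ a ∈ S, p.derivative.rootMultiplicity a :=
        sum_fiberwise_of_maps_to (fun a ha => mem_image_of_mem _ ha) _
    _ = p.natDegree - 1 := by
        rw [sum_rootMultiplicity_roots_toFinset, natDegree_derivative]

theorem card_roots_sub_C_eq_of_le_of_image_eq {p P : K[X]} (hP : 0 < P.natDegree)
    (hdeg : p.natDegree = P.natDegree) {B : K → K}
    (himage : (criticalValueFinset P).image B = criticalValueFinset p)
    (hinj : Set.InjOn B (criticalValueFinset P))
    (hge : ∀ α ∈ criticalValueFinset P,
      #(P - C α).roots.toFinset ≤ #(p - C (B α)).roots.toFinset) :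
    ∀ α ∈ criticalValueFinset P, #(p - C (B α)).roots.toFinset = #(P - C α).roots.toFinset := by
  set n := P.natDegree
  have hsum : ∑ α ∈ criticalValueFinset P, (n - #(p - C (B α)).roots.toFinset) =
      ∑ α ∈ criticalValueFinset P, (n - #(P - C α).roots.toFinset) := by
    rw [← sum_image (f := fun β => n - #(p - C β).roots.toFinset) hinj, himage, ← hdeg,
      sum_natDegree_sub_card_roots_sub_C (hdeg ▸ hP), hdeg, sum_natDegree_sub_card_roots_sub_C hP]
  intro α hα
  have h := (sum_eq_sum_iff_of_le fun α hα => Nat.sub_le_sub_left (hge α hα) n).mp hsum α hα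
  have hPα := card_roots_toFinset_le_natDegree (P - C α)
  have hpα := card_roots_toFinset_le_natDegree (p - C (B α))
  rw [natDegree_sub_C] at hPα hpα
  omega

end RootCounting

section Roots

variable {K ι : Type*} [NormedField K] {q : ι → K[X]} {l : Filter ι} {Q : K[X]}

theorem TendstoCoeffwise.eventually_rootMultiplicity_le [CharZero K]
    (hc : TendstoCoeffwise q l Q) (hQ : Q ≠ 0) (hq : ∀ᶠ k in l, (q k).natDegree ≤ Q.natDegree)
    {a : K} {b : ι → K} (hb : Tendsto b l (𝓝 a)) :
    ∀ᶠ k in l, (q k).rootMultiplicity (b k) ≤ Q.rootMultiplicity a := by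
  set m := Q.rootMultiplicity a
  have hne : (Polynomial.derivative^[m] Q).eval a ≠ 0 := by
    rw [eval_iterate_derivative_rootMultiplicity, nsmul_eq_mul]
    exact mul_ne_zero (Nat.cast_ne_zero.mpr m.factorial_ne_zero)
      (eval_divByMonic_pow_rootMultiplicity_ne_zero a hQ)
  have hlim := (hc.iterate_derivative m).tendsto_eval
    (hq.mono fun k hk => (natDegree_iterate_derivative _ _).trans (tsub_le_self.trans hk))
    ((natDegree_iterate_derivative _ _).trans tsub_le_self) hb
  filter_upwards [hlim.eventually_ne hne] with k hk
  by_contra! hlt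
  exact hk (isRoot_iterate_derivative_of_lt_rootMultiplicity hlt)

variable [IsAlgClosed K]

theorem norm_leadingCoeff_mul_pow_le_norm_eval {p : K[X]} {a : K} {ε : ℝ} (hε : 0 ≤ ε)
    (h : ∀ b ∈ p.roots, ε ≤ ‖a - b‖) : ‖p.leadingCoeff‖ * ε ^ p.natDegree ≤ ‖p.eval a‖ := by
  have hprod : ‖(p.roots.map fun b => a - b).prod‖ = (p.roots.map fun b => ‖a - b‖).prod :=
    (Multiset.prod_hom' _ (normHom : K →*₀ ℝ) _).symm
  rw [(IsAlgClosed.splits p).eval_eq_prod_roots, norm_mul, hprod,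
    ← IsAlgClosed.card_roots_eq_natDegree]
  gcongr
  simpa using Multiset.prod_map_le_prod_map₀ (fun _ => ε) (fun b => ‖a - b‖) (fun _ _ => hε) h

variable [DecidableEq K]

theorem TendstoCoeffwise.exists_tendsto_root (hc : TendstoCoeffwise q l Q) (hQ : Q ≠ 0)
    (hq : ∀ᶠ k in l, (q k).natDegree ≤ Q.natDegree) {a : K} (ha : Q.IsRoot a) :
    ∃ b : ι → K, (∀ᶠ k in l, b k ∈ (q k).roots.toFinset) ∧ Tendsto b l (𝓝 a) := by
  refine exists_tendsto_of_forall_eventually_exists_dist_lt fun ε hε => ?_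
  set d := Q.natDegree
  have hlc : Tendsto (fun k => ‖(q k).coeff d‖ * ε ^ d) l (𝓝 (‖Q.leadingCoeff‖ * ε ^ d)) :=
    (hc d).norm.mul_const _
  have heval : Tendsto (fun k => ‖(q k).eval a‖) l (𝓝 0) := by
    simpa [ha.eq_zero] using (hc.tendsto_eval hq le_rfl (tendsto_const_nhds (x := a))).norm
  have hpos : 0 < ‖Q.leadingCoeff‖ * ε ^ d := by
    have := leadingCoeff_ne_zero.mpr hQ
    positivity
  filter_upwards [heval.eventually_lt hlc hpos, hq] with k hk hkd
  by_contra! hfar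
  have hcoeff : (q k).coeff d ≠ 0 := by
    intro h
    simp only [h, norm_zero, zero_mul] at hk
    exact (norm_nonneg _).not_gt hk
  have hdeg : (q k).natDegree = d := hkd.antisymm (le_natDegree_of_ne_zero hcoeff)
  have hbound := norm_leadingCoeff_mul_pow_le_norm_eval (p := q k) (a := a) hε.le fun b hb => by
    simpa [dist_eq_norm, norm_sub_rev] using hfar b (Multiset.mem_toFinset.mpr hb)
  rw [leadingCoeff, hdeg] at hbound
  linarith

theorem TendstoCoeffwise.exists_mapsTo_injOn_roots (hc : TendstoCoeffwise q l Q) (hQ : Q ≠ 0)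
    (hq : ∀ᶠ k in l, (q k).natDegree ≤ Q.natDegree) :
    ∃ B : K → ι → K, (∀ a ∈ Q.roots.toFinset, Tendsto (B a) l (𝓝 a)) ∧
      ∀ᶠ k in l, Set.MapsTo (B · k) Q.roots.toFinset (q k).roots.toFinset ∧
        Set.InjOn (B · k) Q.roots.toFinset :=
  exists_mapsTo_injOn_of_forall_exists_tendsto fun _ ha =>
    hc.exists_tendsto_root hQ hq ((mem_roots hQ).mp (Multiset.mem_toFinset.mp ha))

theorem TendstoCoeffwise.eventually_card_roots_toFinset_le (hc : TendstoCoeffwise q l Q)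
    (hQ : Q ≠ 0) (hq : ∀ᶠ k in l, (q k).natDegree ≤ Q.natDegree) :
    ∀ᶠ k in l, #Q.roots.toFinset ≤ #(q k).roots.toFinset := by
  obtain ⟨B, -, hB⟩ := hc.exists_mapsTo_injOn_roots hQ hq
  filter_upwards [hB] with k ⟨hmaps, hinj⟩
  exact card_le_card_of_injOn _ hmaps hinj

variable [CharZero K]

theorem TendstoCoeffwise.eventually_map_rootMultiplicity_eq
    (hc : TendstoCoeffwise q l Q) (hQ : Q ≠ 0) (hq : ∀ᶠ k in l, (q k).natDegree = Q.natDegree)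
    (hcard : ∀ᶠ k in l, #(q k).roots.toFinset ≤ #Q.roots.toFinset) :
    ∀ᶠ k in l, (q k).roots.toFinset.val.map (fun x => (q k).rootMultiplicity x) =
      Q.roots.toFinset.val.map fun x => Q.rootMultiplicity x := by
  have hq' := hq.mono fun k hk => hk.le
  obtain ⟨B, hB, hBk⟩ := hc.exists_mapsTo_injOn_roots hQ hq'
  have hmult := (eventually_all_finset _).mpr fun a ha =>
    hc.eventually_rootMultiplicity_le hQ hq' (hB a ha)
  filter_upwards [hBk, hcard, hmult, hq] with k ⟨hmaps, hinj⟩ hk hmk hdeg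
  have himage : Q.roots.toFinset.image (B · k) = (q k).roots.toFinset :=
    eq_of_subset_of_card_le (image_subset_iff.mpr hmaps) (hk.trans (card_image_of_injOn hinj).ge)
  have hsum : ∑ a ∈ Q.roots.toFinset, (q k).rootMultiplicity (B a k) =
      ∑ a ∈ Q.roots.toFinset, Q.rootMultiplicity a := by
    rw [← sum_image (f := fun x => (q k).rootMultiplicity x) hinj, himage,
      sum_rootMultiplicity_roots_toFinset, sum_rootMultiplicity_roots_toFinset, hdeg]
  have heq := (sum_eq_sum_iff_of_le hmk).mp hsum
  rw [← himage, image_val_of_injOn hinj, Multiset.map_map]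
  exact Multiset.map_congr rfl heq

theorem TendstoCoeffwise.exists_tendsto_criticalValue (hc : TendstoCoeffwise q l Q)
    (hq : ∀ᶠ k in l, (q k).natDegree ≤ Q.natDegree) {α : K} (hα : α ∈ criticalValueFinset Q) :
    ∃ β : ι → K, (∀ᶠ k in l, β k ∈ criticalValueFinset (q k)) ∧ Tendsto β l (𝓝 α) := by
  obtain ⟨a, ha, rfl⟩ := mem_image.mp hα
  have hQ' : Q.derivative ≠ 0 := fun h => by simp [h] at ha
  have hq' : ∀ᶠ k in l, (q k).derivative.natDegree ≤ Q.derivative.natDegree :=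
    hq.mono fun k hk => by simpa only [natDegree_derivative] using Nat.sub_le_sub_right hk 1
  obtain ⟨c, hcroot, hclim⟩ := hc.derivative.exists_tendsto_root hQ' hq'
    ((mem_roots hQ').mp (Multiset.mem_toFinset.mp ha))
  exact ⟨fun k => (q k).eval (c k), hcroot.mono fun k hk => mem_image_of_mem _ hk,
    hc.tendsto_eval hq le_rfl hclim⟩

end Roots

theorem criticalValues_eq_coe_criticalValueFinset {p : ℂ[X]} (hp : p.derivative ≠ 0) :
    criticalValues p = criticalValueFinset p := by
  ext β
  simp [criticalValues, criticalValueFinset, mem_roots hp]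

theorem passport_eq_map_fiberMults (p : ℂ[X]) :
    passport p = (criticalValueFinset p).val.map (fiberMults p) :=
  rfl

theorem TendstoCoeffwise.eventually_passport_eq {ι : Type*} {q : ι → ℂ[X]} {l : Filter ι}
    {Q : ℂ[X]} (hc : TendstoCoeffwise q l Q) (hQ : 0 < Q.natDegree)
    (hq : ∀ᶠ k in l, (q k).natDegree = Q.natDegree)
    (hcard : ∀ᶠ k in l, #(criticalValueFinset (q k)) = #(criticalValueFinset Q)) :
    ∀ᶠ k in l, passport (q k) = passport Q := by
  set T := criticalValueFinset Q
  have hq' := hq.mono fun k hk => hk.le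
  obtain ⟨B, hB, hBk⟩ := exists_mapsTo_injOn_of_forall_exists_tendsto
    (s := fun k => (criticalValueFinset (q k) : Set ℂ)) fun α hα =>
      hc.exists_tendsto_criticalValue hq' hα
  have hbij : ∀ᶠ k in l, T.image (B · k) = criticalValueFinset (q k) ∧ Set.InjOn (B · k) T := by
    filter_upwards [hBk, hcard] with k ⟨hmaps, hinj⟩ hk
    exact ⟨eq_of_subset_of_card_le (image_subset_iff.mpr hmaps)
      (hk.trans (card_image_of_injOn hinj).symm).le, hinj⟩
  have hfib : ∀ α ∈ T, TendstoCoeffwise (fun k => q k - C (B α k)) l (Q - C α) :=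
    fun α hα => hc.sub_C (hB α hα)
  have hfibdeg : ∀ α, ∀ᶠ k in l, (q k - C (B α k)).natDegree = (Q - C α).natDegree :=
    fun α => hq.mono fun k hk => by rw [natDegree_sub_C, natDegree_sub_C, hk]
  have hge := (eventually_all_finset T).mpr fun α hα =>
    (hfib α hα).eventually_card_roots_toFinset_le (sub_C_ne_zero hQ α)
      ((hfibdeg α).mono fun k hk => hk.le)
  have hle : ∀ᶠ k in l, ∀ α ∈ T,
      #(q k - C (B α k)).roots.toFinset ≤ #(Q - C α).roots.toFinset := by
    filter_upwards [hbij, hq, hge] with k ⟨himage, hinj⟩ hdeg hge α hα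
    exact (card_roots_sub_C_eq_of_le_of_image_eq hQ hdeg himage hinj hge α hα).le
  have hmults := (eventually_all_finset T).mpr fun α hα =>
    (hfib α hα).eventually_map_rootMultiplicity_eq (sub_C_ne_zero hQ α) (hfibdeg α)
      (hle.mono fun k hk => hk α hα)
  filter_upwards [hbij, hmults] with k ⟨himage, hinj⟩ hmult
  rw [passport_eq_map_fiberMults, passport_eq_map_fiberMults, ← himage, image_val_of_injOn hinj,
    Multiset.map_map]
  exact Multiset.map_congr rfl hmult

/-- In a continuous family of Zolotarev polynomials of degree `n`, all passports coincide. -/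
theorem passport_constant (n : ℕ) (hn : 1 ≤ n) (p : ℝ → ℂ[X])
    (hdeg : ∀ t ∈ Set.Ioo (0 : ℝ) 1, (p t).degree = n)
    (hcont : ∀ i : ℕ, ContinuousOn (fun t => (p t).coeff i) (Set.Ioo (0 : ℝ) 1))
    (hZol : ∀ t ∈ Set.Ioo (0 : ℝ) 1, (criticalValues (p t)).ncard = 3) :
    ∀ s ∈ Set.Ioo (0 : ℝ) 1, ∀ t ∈ Set.Ioo (0 : ℝ) 1, passport (p s) = passport (p t) := by
  intro s hs t ht
  have hnat : ∀ t ∈ Set.Ioo (0 : ℝ) 1, (p t).natDegree = n := fun t ht =>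
    natDegree_eq_of_degree_eq_some (hdeg t ht)
  have hcard : ∀ t ∈ Set.Ioo (0 : ℝ) 1, #(criticalValueFinset (p t)) = 3 := fun t ht => by
    have hder : (p t).derivative ≠ 0 := by
      rw [Ne, derivative_eq_zero, hnat t ht]
      omega
    rw [← hZol t ht, criticalValues_eq_coe_criticalValueFinset hder, Set.ncard_coe_finset]
  refine eq_of_germ_isConstant_on (f := fun t => passport (p t))
    (fun x hx => ⟨passport (p x), ?_⟩) isPreconnected_Ioo hs ht
  have hnear : ∀ᶠ t in 𝓝 x, t ∈ Set.Ioo (0 : ℝ) 1 := Ioo_mem_nhds hx.1 hx.2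
  exact TendstoCoeffwise.eventually_passport_eq (fun i => (hcont i).continuousAt hnear)
    (hnat x hx ▸ hn)
    (hnear.mono fun t ht => (hnat t ht).trans (hnat x hx).symm)
    (hnear.mono fun t ht => (hcard t ht).trans (hcard x hx).symm)
end

section
/- Let n ≥ 2 and let λ ↦ p_λ be a map from [0,1) to ℂ[X] with deg p_λ = n for all λ and all coefficients continuous in λ, such that p_0 has exactly two distinct critical values and p_λ has exactly three distinct critical values for every λ ∈ (0,1). Let a ∈ ℂ and k ≥ 2 be such that a is a root of p_0' of multiplicity exactly k − 1. Let m ≥ 2 and k_1, …, k_m ≥ 2 satisfy (k_1 − 1) + ⋯ + (k_m − 1) = k − 1, and let a_1, …, a_m : [0,1) → ℂ be continuous functions with a_i(0) = a for all i, such that for every λ ∈ (0,1) the points a_1(λ), …, a_m(λ) are pairwise distinct and a_i(λ) is a root of (p_λ)' of multiplicity exactly k_i − 1. Then the numbers p_λ(a_1(λ)), …, p_λ(a_m(λ)) cannot all be equal for every λ ∈ (0,1); that is, there exist λ ∈ (0,1) and indices i, j with p_λ(a_i(λ)) ≠ p_λ(a_j(λ)). -/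
open Polynomial

/-!
If all values `p_λ(a_i(λ))` were equal to some `c_λ`, then `p_λ - c_λ` would vanish at the
distinct points `a_i(λ)` to the orders `k_i`, hence be divisible by `∏ i, (X - a_i(λ)) ^ k_i`, of
degree `∑ k_i = k - 1 + m`. Divisibility passes to coefficientwise limits of polynomials of
bounded degree: the quotients have bounded degree and their values converge at every point where
the limit divisor does not vanish, so by Lagrange interpolation they converge as well. Letting
`λ → 0`, `p_0 - p_0(a)` would vanish at `a` to order `k - 1 + m > k`, while its order there is `k`.
-/

open Filter Topology

namespace Polynomial

theorem rootMultiplicity_sub_C_eval_s4 {R : Type*} [CommRing R] [IsDomain R] [CharZero R]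
    {p : R[X]} (hp : 0 < p.natDegree) (x : R) :
    (p - C (p.eval x)).rootMultiplicity x = p.derivative.rootMultiplicity x + 1 := by
  have hne : p - C (p.eval x) ≠ 0 := ne_zero_of_natDegree_gt (n := 0) (by rwa [natDegree_sub_C])
  have hroot : (p - C (p.eval x)).IsRoot x := by simp
  have hpos := (rootMultiplicity_pos hne).2 hroot
  have hder := derivative_rootMultiplicity_of_root hroot
  rw [derivative_sub, derivative_C, sub_zero] at hder
  omega

theorem prod_X_sub_C_pow_dvd {K ι : Type*} [Field K] [Fintype ι] {x : ι → K}
    (hx : Function.Injective x) {μ : ι → ℕ} {f : K[X]}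
    (h : ∀ i, μ i ≤ f.rootMultiplicity (x i)) : ∏ i, (X - C (x i)) ^ μ i ∣ f :=
  Fintype.prod_dvd_of_coprime (fun _ _ hij => ((pairwise_coprime_X_sub_C hx) hij).pow)
    fun i => (pow_dvd_pow _ (h i)).trans (pow_rootMultiplicity_dvd f (x i))

def TendstoCoeffs {α R : Type*} [Semiring R] [TopologicalSpace R] (l : Filter α)
    (f : α → R[X]) (F : R[X]) : Prop :=
  ∀ c, Tendsto (fun t => (f t).coeff c) l (𝓝 (F.coeff c))

variable {α : Type*} {l : Filter α}

section Semiring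

variable {R : Type*} [Semiring R] [TopologicalSpace R] {f g : α → R[X]} {F G : R[X]}

theorem tendstoCoeffs_const (F : R[X]) : TendstoCoeffs l (fun _ => F) F :=
  fun _ => tendsto_const_nhds

theorem tendstoCoeffs_C {z : α → R} {z₀ : R} (hz : Tendsto z l (𝓝 z₀)) :
    TendstoCoeffs l (fun t => C (z t)) (C z₀) := by
  intro c
  rcases eq_or_ne c 0 with rfl | hc
  · simpa using hz
  · simpa [coeff_C, hc] using tendsto_const_nhds

namespace TendstoCoeffs

theorem mul [IsTopologicalSemiring R] (hf : TendstoCoeffs l f F) (hg : TendstoCoeffs l g G) :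
    TendstoCoeffs l (fun t => f t * g t) (F * G) := fun c => by
  simp only [coeff_mul]
  exact tendsto_finsetSum _ fun x _ => (hf x.1).mul (hg x.2)

theorem pow [IsTopologicalSemiring R] (hf : TendstoCoeffs l f F) (e : ℕ) :
    TendstoCoeffs l (fun t => f t ^ e) (F ^ e) := by
  induction e with
  | zero => simpa using tendstoCoeffs_const 1
  | succ e ih => simpa only [pow_succ] using ih.mul hf

variable [T2Space R] [l.NeBot]

theorem unique (hf : TendstoCoeffs l f F) (hg : TendstoCoeffs l g G) (hfg : f =ᶠ[l] g) :
    F = G :=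
  ext fun c => tendsto_nhds_unique ((hf c).congr' (hfg.mono fun _ h => by rw [h])) (hg c)

theorem natDegree_le {N : ℕ} (hf : TendstoCoeffs l f F)
    (hdeg : ∀ᶠ t in l, (f t).natDegree ≤ N) : F.natDegree ≤ N :=
  natDegree_le_iff_coeff_eq_zero.2 fun c hc => tendsto_nhds_unique (hf c)
    (tendsto_const_nhds.congr' (hdeg.mono fun t ht =>
      (coeff_eq_zero_of_natDegree_lt (ht.trans_lt (by exact_mod_cast hc))).symm))

theorem tendsto_eval [IsTopologicalSemiring R] {N : ℕ} (hf : TendstoCoeffs l f F)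
    (hdeg : ∀ᶠ t in l, (f t).natDegree ≤ N) {z : α → R} {z₀ : R} (hz : Tendsto z l (𝓝 z₀)) :
    Tendsto (fun t => (f t).eval (z t)) l (𝓝 (F.eval z₀)) := by
  rw [eval_eq_sum_range' (Nat.lt_succ_of_le (hf.natDegree_le hdeg))]
  refine (tendsto_finsetSum _ fun c _ => (hf c).mul (hz.pow c)).congr' ?_
  filter_upwards [hdeg] with t ht
  rw [eval_eq_sum_range' (Nat.lt_succ_of_le ht)]

end TendstoCoeffs

end Semiring

namespace TendstoCoeffs

theorem sub {R : Type*} [Ring R] [TopologicalSpace R] [IsTopologicalRing R] {f g : α → R[X]}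
    {F G : R[X]} (hf : TendstoCoeffs l f F) (hg : TendstoCoeffs l g G) :
    TendstoCoeffs l (fun t => f t - g t) (F - G) := fun c => by
  simpa only [coeff_sub] using (hf c).sub (hg c)

theorem prod {R ι : Type*} [CommSemiring R] [TopologicalSpace R] [IsTopologicalSemiring R]
    (s : Finset ι) {f : ι → α → R[X]} {F : ι → R[X]} (h : ∀ i ∈ s, TendstoCoeffs l (f i) (F i)) :
    TendstoCoeffs l (fun t => ∏ i ∈ s, f i t) (∏ i ∈ s, F i) := by
  classical
  induction s using Finset.induction with
  | empty => simpa using tendstoCoeffs_const 1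
  | insert x s hx ih =>
    simp only [Finset.prod_insert hx]
    exact (h x (s.mem_insert_self x)).mul (ih fun i hi => h i (Finset.mem_insert_of_mem hi))

variable {K : Type*} [Field K] [TopologicalSpace K] [IsTopologicalDivisionRing K]

theorem of_tendsto_eval {ι : Type*} [DecidableEq ι] {s : Finset ι} {v : ι → K}
    (hv : Set.InjOn v s) {f : α → K[X]} {y : ι → K} (hdeg : ∀ᶠ t in l, (f t).degree < s.card)
    (hy : ∀ i ∈ s, Tendsto (fun t => (f t).eval (v i)) l (𝓝 (y i))) :
    TendstoCoeffs l f (Lagrange.interpolate s v y) := by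
  intro c
  simp only [Lagrange.interpolate_apply, finsetSum_coeff, coeff_C_mul]
  refine (tendsto_finsetSum _ fun i hi => (hy i hi).mul tendsto_const_nhds).congr' ?_
  filter_upwards [hdeg] with t ht
  conv_rhs => rw [Lagrange.eq_interpolate hv ht]
  simp only [Lagrange.interpolate_apply, finsetSum_coeff, coeff_C_mul]

variable [T2Space K] [Infinite K] [l.NeBot]

theorem dvd_of_eventually_dvd {f d : α → K[X]} {F D : K[X]} {N M : ℕ}
    (hf : TendstoCoeffs l f F) (hd : TendstoCoeffs l d D) (hD : D ≠ 0)
    (hf_deg : ∀ᶠ t in l, (f t).natDegree ≤ N) (hd_deg : ∀ᶠ t in l, (d t).natDegree ≤ M)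
    (hdvd : ∀ᶠ t in l, d t ∣ f t) : D ∣ F := by
  classical
  obtain ⟨s, hsD, hs⟩ : ∃ s : Finset K, ↑s ⊆ {z | D.eval z ≠ 0} ∧ s.card = N + 1 :=
    (finite_setOfPred_isRoot hD).infinite_compl.exists_subset_card_eq _
  have hd_ne : ∀ᶠ t in l, d t ≠ 0 := by
    filter_upwards [(hd D.natDegree).eventually_ne (leadingCoeff_ne_zero.2 hD)] with t ht h
    simp [h] at ht
  have hfactor : ∀ᶠ t in l, d t * (f t / d t) = f t := by
    filter_upwards [hd_ne, hdvd] with t hne h using EuclideanDomain.mul_div_cancel' hne h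
  have hquot : TendstoCoeffs l (fun t => f t / d t)
      (Lagrange.interpolate s id fun z => F.eval z / D.eval z) := by
    refine of_tendsto_eval (Set.injOn_id _) ?_ fun z hz => ?_
    · filter_upwards [hf_deg] with t ht
      refine (degree_div_le _ _).trans_lt (degree_le_natDegree.trans_lt ?_)
      rw [hs]
      exact_mod_cast Nat.lt_succ_of_le ht
    · have hdz := hd.tendsto_eval hd_deg (tendsto_const_nhds (x := z))
      refine ((hf.tendsto_eval hf_deg tendsto_const_nhds).div hdz (hsD hz)).congr' ?_
      filter_upwards [hfactor, hdz.eventually_ne (hsD hz)] with t ht hzt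
      change (f t).eval z / (d t).eval z = (f t / d t).eval z
      rw [div_eq_iff hzt, ← eval_mul, mul_comm, ht]
  exact ⟨_, hf.unique (hd.mul hquot) (hfactor.mono fun _ h => h.symm)⟩

/-- Upper semicontinuity of root multiplicity. -/
theorem sum_le_rootMultiplicity {ι : Type*} [Fintype ι] {f : α → K[X]} {F : K[X]} {N : ℕ}
    (hf : TendstoCoeffs l f F) (hF : F ≠ 0) (hdeg : ∀ᶠ t in l, (f t).natDegree ≤ N)
    {x : ι → α → K} {a : K} (hx : ∀ i, Tendsto (x i) l (𝓝 a))
    (hinj : ∀ᶠ t in l, Function.Injective fun i => x i t) {μ : ι → ℕ}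
    (hμ : ∀ᶠ t in l, ∀ i, μ i ≤ (f t).rootMultiplicity (x i t)) :
    ∑ i, μ i ≤ F.rootMultiplicity a := by
  have hd : TendstoCoeffs l (fun t => ∏ i, (X - C (x i t)) ^ μ i) ((X - C a) ^ ∑ i, μ i) := by
    rw [← Finset.prod_pow_eq_pow_sum]
    exact prod _ fun i _ => ((tendstoCoeffs_const X).sub (tendstoCoeffs_C (hx i))).pow _
  refine (le_rootMultiplicity_iff hF).2 (hf.dvd_of_eventually_dvd (M := ∑ i, μ i) hd
    (pow_ne_zero _ (X_sub_C_ne_zero a)) hdeg (.of_forall fun t => ?_) ?_)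
  · exact (natDegree_prod_le _ _).trans (Finset.sum_le_sum fun i _ =>
      natDegree_pow_le.trans (by rw [natDegree_X_sub_C, mul_one]))
  · filter_upwards [hinj, hμ] with t ht htμ using prod_X_sub_C_pow_dvd ht htμ

end TendstoCoeffs

end Polynomial

open Set

theorem split_values_not_all_equal_general (n : ℕ) (hn : 2 ≤ n) (p : ℝ → ℂ[X])
    (hdeg : ∀ t ∈ Set.Ico (0 : ℝ) 1, (p t).degree = n)
    (hcont : ∀ i : ℕ, ContinuousOn (fun t => (p t).coeff i) (Set.Ico (0 : ℝ) 1))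
    (a : ℂ) (k : ℕ)
    (ha : (p 0).derivative.rootMultiplicity a = k - 1)
    (m : ℕ) (hm : 2 ≤ m) (ks : Fin m → ℕ)
    (hsum : ∑ i, (ks i - 1) = k - 1)
    (as : Fin m → ℝ → ℂ)
    (hascont : ∀ i, ContinuousOn (as i) (Set.Ico (0 : ℝ) 1))
    (has0 : ∀ i, as i 0 = a)
    (hdist : ∀ t ∈ Set.Ioo (0 : ℝ) 1, ∀ i j, i ≠ j → as i t ≠ as j t)
    (hmult : ∀ t ∈ Set.Ioo (0 : ℝ) 1, ∀ i,
      (p t).derivative.rootMultiplicity (as i t) = ks i - 1) :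
    ∃ t ∈ Set.Ioo (0 : ℝ) 1, ∃ i j,
      (p t).eval (as i t) ≠ (p t).eval (as j t) := by
  by_contra! hequal
  have h0_mem : (0 : ℝ) ∈ Ico 0 1 := ⟨le_rfl, one_pos⟩
  have hIoo : ∀ᶠ t in 𝓝[>] (0 : ℝ), t ∈ Ioo 0 1 := Ioo_mem_nhdsGT one_pos
  have hIco : Ico (0 : ℝ) 1 ∈ 𝓝[>] 0 := mem_of_superset hIoo Ioo_subset_Ico_self
  have hp_deg : ∀ t ∈ Ico (0 : ℝ) 1, (p t).natDegree = n :=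
    fun t ht => natDegree_eq_of_degree_eq_some (hdeg t ht)
  have hp_pos : ∀ t ∈ Ico (0 : ℝ) 1, 0 < (p t).natDegree := fun t ht => by
    rw [hp_deg t ht]; omega
  have hp : TendstoCoeffs (𝓝[>] 0) p (p 0) :=
    fun c => (hcont c 0 h0_mem).mono_of_mem_nhdsWithin hIco
  have has : ∀ i, Tendsto (as i) (𝓝[>] 0) (𝓝 a) :=
    fun i => has0 i ▸ (hascont i 0 h0_mem).mono_of_mem_nhdsWithin hIco
  let i₀ : Fin m := ⟨0, by omega⟩
  have hp_le : ∀ᶠ t in 𝓝[>] (0 : ℝ), (p t).natDegree ≤ n :=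
    mem_of_superset hIco fun t ht => (hp_deg t ht).le
  have hq : TendstoCoeffs (𝓝[>] 0) (fun t => p t - C ((p t).eval (as i₀ t)))
      (p 0 - C ((p 0).eval a)) :=
    hp.sub (tendstoCoeffs_C (hp.tendsto_eval hp_le (has i₀)))
  -- on `(0, 1)`, each `as i t` is a root of order `ks i - 1 + 1` of the polynomials in `hq`
  have key := hq.sum_le_rootMultiplicity
    (ne_zero_of_natDegree_gt (n := 0) (by rw [natDegree_sub_C]; exact hp_pos 0 h0_mem))
    (hp_le.mono fun t ht => natDegree_sub_C.trans_le ht) has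
    (hIoo.mono fun t ht i j hij => not_not.1 fun hne => hdist t ht i j hne hij)
    (μ := fun i => ks i - 1 + 1) (hIoo.mono fun t ht i => by
      rw [hequal t ht i₀ i, rootMultiplicity_sub_C_eval_s4 (hp_pos t (Ioo_subset_Ico_self ht)),
        hmult t ht i])
  rw [rootMultiplicity_sub_C_eval_s4 (hp_pos 0 h0_mem), ha, Finset.sum_add_distrib, hsum] at key
  simp only [Finset.sum_const, Finset.card_univ, Fintype.card_fin, smul_eq_mul, mul_one] at key
  omega

/-- If a Chebyshev polynomial `p₀` degenerates a critical point `a` of multiplicity `k`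
into `m ≥ 2` critical points `a₁(λ), …, a_m(λ)` of multiplicities `k₁, …, k_m` inside a
family of Zolotarev polynomials, then the values `p_λ(a₁(λ)), …, p_λ(a_m(λ))` cannot all
be equal for every `λ ∈ (0,1)`. -/
theorem split_values_not_all_equal (n : ℕ) (hn : 2 ≤ n) (p : ℝ → ℂ[X])
    (hdeg : ∀ t ∈ Set.Ico (0 : ℝ) 1, (p t).degree = n)
    (hcont : ∀ i : ℕ, ContinuousOn (fun t => (p t).coeff i) (Set.Ico (0 : ℝ) 1))
    (h0 : (criticalValues (p 0)).ncard = 2)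
    (hZol : ∀ t ∈ Set.Ioo (0 : ℝ) 1, (criticalValues (p t)).ncard = 3)
    (a : ℂ) (k : ℕ) (hk : 2 ≤ k)
    (ha : (p 0).derivative.rootMultiplicity a = k - 1)
    (m : ℕ) (hm : 2 ≤ m) (ks : Fin m → ℕ) (hks : ∀ i, 2 ≤ ks i)
    (hsum : ∑ i, (ks i - 1) = k - 1)
    (as : Fin m → ℝ → ℂ)
    (hascont : ∀ i, ContinuousOn (as i) (Set.Ico (0 : ℝ) 1))
    (has0 : ∀ i, as i 0 = a)
    (hdist : ∀ t ∈ Set.Ioo (0 : ℝ) 1, ∀ i j, i ≠ j → as i t ≠ as j t)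
    (hmult : ∀ t ∈ Set.Ioo (0 : ℝ) 1, ∀ i,
      (p t).derivative.rootMultiplicity (as i t) = ks i - 1) :
    ∃ t ∈ Set.Ioo (0 : ℝ) 1, ∃ i j,
      (p t).eval (as i t) ≠ (p t).eval (as j t) :=
  split_values_not_all_equal_general n hn p hdeg hcont a k ha m hm ks hsum as hascont has0 hdist
    hmult
end

section
/- Let p ∈ ℂ[X] have degree n ≥ 1 and exactly three distinct critical values α, β, γ (that is, the image of the set of roots of p' under evaluation by p is exactly {α, β, γ} with α, β, γ pairwise distinct). Let r, s, t be the numbers of distinct roots of p − α, p − β, p − γ respectively. Then r + s + t = 2n + 1. -/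
/-!
A root of `p - c` of multiplicity `k` is a root of `p'` of multiplicity `k - 1`, so the number of
distinct roots of `p - c` plus the number of critical points (with multiplicity) lying over `c`
is `n`. Adding this up over `α, β, γ`, which between them carry all `n - 1` critical points,
gives `r + s + t + (n - 1) = 3n`.
-/

open Polynomial

namespace Polynomial

theorem card_roots_toFinset_add_card_filter_isRoot_roots_derivative {R : Type*} [CommRing R]
    [IsDomain R] [CharZero R] [DecidableEq R] {f : R[X]} (hf : f ≠ 0) :
    f.roots.toFinset.card + (f.derivative.roots.filter f.IsRoot).card = f.roots.card := by
  have hcount : ∀ x ∈ f.roots.toFinset, f.roots.count x = f.derivative.roots.count x + 1 := by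
    intro x hx
    have hroot : f.IsRoot x := (mem_roots hf).mp (Multiset.mem_toFinset.mp hx)
    rw [count_roots, count_roots, derivative_rootMultiplicity_of_root hroot]
    have := (rootMultiplicity_pos hf).mpr hroot
    omega
  have hfilter : (f.derivative.roots.filter f.IsRoot).card =
      ∑ x ∈ f.roots.toFinset, f.derivative.roots.count x := by
    rw [← Multiset.sum_count_eq_card fun x hx => Multiset.mem_toFinset.mpr <|
      (mem_roots hf).mpr (Multiset.of_mem_filter hx)]
    refine Finset.sum_congr rfl fun x hx => Multiset.count_filter_of_pos ?_
    exact (mem_roots hf).mp (Multiset.mem_toFinset.mp hx)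
  rw [hfilter, ← Multiset.toFinset_sum_count_eq f.roots, Finset.sum_congr rfl hcount,
    Finset.sum_add_distrib, Finset.sum_const, smul_eq_mul, mul_one, add_comm]

section AlgClosed

variable {K : Type*} [Field K] [IsAlgClosed K] [CharZero K]

noncomputable def criticalValueMultiset (p : K[X]) : Multiset K :=
  p.derivative.roots.map p.eval

theorem card_criticalValueMultiset (p : K[X]) :
    (criticalValueMultiset p).card = p.natDegree - 1 := by
  rw [criticalValueMultiset, Multiset.card_map, splits_iff_card_roots.mp (IsAlgClosed.splits _),
    natDegree_derivative]

theorem card_roots_sub_C_toFinset_add_count_criticalValueMultiset [DecidableEq K] {p : K[X]}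
    (hp : 0 < p.natDegree) (c : K) :
    (p - C c).roots.toFinset.card + (criticalValueMultiset p).count c = p.natDegree := by
  have hpc : p - C c ≠ 0 := fun h => by
    rw [← natDegree_sub_C (a := c), h, natDegree_zero] at hp
    exact hp.false
  have hfiber : (p - C c).derivative.roots.filter (p - C c).IsRoot =
      p.derivative.roots.filter fun x => c = p.eval x := by
    rw [derivative_sub, derivative_C, sub_zero]
    exact Multiset.filter_congr fun x _ => by rw [IsRoot.def, eval_sub, eval_C, sub_eq_zero, eq_comm]
  have := card_roots_toFinset_add_card_filter_isRoot_roots_derivative hpc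
  rwa [hfiber, splits_iff_card_roots.mp (IsAlgClosed.splits _), natDegree_sub_C,
    ← Multiset.count_map] at this

end AlgClosed

theorem mem_criticalValues_of_mem_criticalValueMultiset {p : ℂ[X]} {c : ℂ}
    (hc : c ∈ criticalValueMultiset p) : c ∈ criticalValues p := by
  obtain ⟨x, hx, rfl⟩ := Multiset.mem_map.mp hc
  exact ⟨x, (mem_roots'.mp hx).2, rfl⟩

end Polynomial

/-- For a degree-`n` polynomial with exactly three distinct critical values `α, β, γ`,
the numbers `r, s, t` of distinct roots of `p - α`, `p - β`, `p - γ` satisfy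
`r + s + t = 2n + 1`. -/
theorem zolotarev_fiber_count (p : ℂ[X]) (n : ℕ) (hn : 1 ≤ n) (hdeg : p.degree = n)
    (α β γ : ℂ) (hαβ : α ≠ β) (hαγ : α ≠ γ) (hβγ : β ≠ γ)
    (hcv : criticalValues p = {α, β, γ}) :
    (p - C α).roots.toFinset.card + (p - C β).roots.toFinset.card +
      (p - C γ).roots.toFinset.card = 2 * n + 1 := by
  have hnat : p.natDegree = n := natDegree_eq_of_degree_eq_some hdeg
  have hpos : 0 < p.natDegree := by omega
  have hcover : ∀ c ∈ criticalValueMultiset p, c ∈ ({α, β, γ} : Finset ℂ) := fun c hc => by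
    have := mem_criticalValues_of_mem_criticalValueMultiset hc
    rw [hcv] at this
    simpa using this
  have hsum := Multiset.sum_count_eq_card hcover
  rw [Finset.sum_insert (by simp [hαβ, hαγ]), Finset.sum_pair hβγ,
    card_criticalValueMultiset] at hsum
  have hα := card_roots_sub_C_toFinset_add_count_criticalValueMultiset hpos α
  have hβ := card_roots_sub_C_toFinset_add_count_criticalValueMultiset hpos β
  have hγ := card_roots_sub_C_toFinset_add_count_criticalValueMultiset hpos γ
  omega
end

section
/- Let p ∈ ℂ[X] have degree n ≥ 1 and exactly two distinct critical values α, β (that is, the image of the set of roots of p' under evaluation by p is exactly {α, β} with α ≠ β). Let r and s be the numbers of distinct roots of p − α and of p − β respectively. Then r + s = n + 1. -/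
/-!
A root of `p - c` of multiplicity `m` is a root of `p'` of multiplicity `m - 1`, so over an
algebraically closed field of characteristic zero the number of distinct roots of `p - c`
equals `deg p` minus the multiplicity of `p'` along the fibre `p⁻¹(c)`. If all critical values
lie in `{α, β}`, the fibres over `α` and `β` are disjoint and together carry all `deg p - 1`
roots of `p'`; adding the two counts gives `r + s = 2 deg p - (deg p - 1) = deg p + 1`.
-/

open Polynomial

namespace Polynomial

section CommRing

variable {R : Type*} [CommRing R] [IsDomain R] [DecidableEq R]

lemma sum_rootMultiplicity_eq_card_roots {p : R[X]} {s : Finset R}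
    (hs : p.roots.toFinset ⊆ s) : ∑ x ∈ s, p.rootMultiplicity x = p.roots.card := by
  simp_rw [← count_roots]
  exact Multiset.sum_count_eq_card fun x hx => hs (Multiset.mem_toFinset.mpr hx)

lemma card_roots_toFinset_add_sum_rootMultiplicity_derivative [CharZero R] (p : R[X]) :
    p.roots.toFinset.card + ∑ x ∈ p.roots.toFinset, p.derivative.rootMultiplicity x =
      p.roots.card := by
  rw [← sum_rootMultiplicity_eq_card_roots subset_rfl, Finset.card_eq_sum_ones,
    ← Finset.sum_add_distrib]
  refine Finset.sum_congr rfl fun x hx => ?_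
  have hx : x ∈ p.roots := Multiset.mem_toFinset.mp hx
  have hpos : 0 < p.rootMultiplicity x :=
    (rootMultiplicity_pos (ne_zero_of_mem_roots hx)).mpr (isRoot_of_mem_roots hx)
  rw [derivative_rootMultiplicity_of_root (isRoot_of_mem_roots hx)]
  omega

lemma disjoint_roots_sub_C {p : R[X]} {α β : R} (hαβ : α ≠ β) :
    Disjoint (p - C α).roots.toFinset (p - C β).roots.toFinset := by
  simp only [Finset.disjoint_left, Multiset.mem_toFinset, mem_roots_sub_C']
  rintro x ⟨-, rfl⟩ ⟨-, h⟩
  exact hαβ h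

end CommRing

section IsAlgClosed

variable {K : Type*} [Field K] [IsAlgClosed K] [CharZero K] [DecidableEq K]

lemma card_roots_sub_C_toFinset_add_sum_rootMultiplicity_derivative (p : K[X]) (c : K) :
    (p - C c).roots.toFinset.card
      + ∑ x ∈ (p - C c).roots.toFinset, p.derivative.rootMultiplicity x = p.natDegree := by
  have h := card_roots_toFinset_add_sum_rootMultiplicity_derivative (p - C c)
  rwa [derivative_sub, derivative_C, sub_zero, IsAlgClosed.card_roots_eq_natDegree,
    natDegree_sub_C] at h

end IsAlgClosed

end Polynomial

lemma roots_derivative_subset_of_criticalValues_subset {p : ℂ[X]} (hp : 0 < p.degree)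
    {α β : ℂ} (hcv : criticalValues p ⊆ {α, β}) :
    p.derivative.roots.toFinset ⊆ (p - C α).roots.toFinset ∪ (p - C β).roots.toFinset := by
  intro x hx
  have hcrit : p.eval x ∈ criticalValues p :=
    ⟨x, isRoot_of_mem_roots (Multiset.mem_toFinset.mp hx), rfl⟩
  simp only [Finset.mem_union, Multiset.mem_toFinset, mem_roots_sub_C hp]
  simpa using hcv hcrit

/-- For a degree-`n` polynomial with exactly two distinct critical values `α, β`,
the numbers `r, s` of distinct roots of `p - α` and `p - β` satisfy `r + s = n + 1`. -/
theorem chebyshev_fiber_count (p : ℂ[X]) (n : ℕ) (hn : 1 ≤ n) (hdeg : p.degree = n)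
    (α β : ℂ) (hαβ : α ≠ β)
    (hcv : criticalValues p = {α, β}) :
    (p - C α).roots.toFinset.card + (p - C β).roots.toFinset.card = n + 1 := by
  have hnat : p.natDegree = n := natDegree_eq_of_degree_eq_some hdeg
  have hpos : 0 < p.degree := by rw [hdeg]; exact_mod_cast hn
  have hderiv := sum_rootMultiplicity_eq_card_roots
    (roots_derivative_subset_of_criticalValues_subset hpos hcv.subset)
  rw [Finset.sum_union (disjoint_roots_sub_C hαβ), IsAlgClosed.card_roots_eq_natDegree,
    natDegree_derivative] at hderiv
  have hα := card_roots_sub_C_toFinset_add_sum_rootMultiplicity_derivative p α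
  have hβ := card_roots_sub_C_toFinset_add_sum_rootMultiplicity_derivative p β
  omega
end

section
/- For a ∈ ℂ let p_a = X⁵/5 − (1+a)X⁴/4 + aX³/3 (an antiderivative of X²(X−1)(X−a)). Then p_a has exactly two distinct critical values if and only if a ∈ {0, 1, 3/5, 5/3, (−2 + i√5)/3, (−2 − i√5)/3}; for all other values of a, p_a has exactly three distinct critical values. -/
open Polynomial

/-- The antiderivative of `X²(X-1)(X-a)` vanishing at `0`. -/
noncomputable def pA (a : ℂ) : ℂ[X] :=
  C (1 / 5) * X ^ 5 - C ((1 + a) / 4) * X ^ 4 + C (a / 3) * X ^ 3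

/-!
The derivative of `p_a` is `X²(X - 1)(X - a)`, so the critical values are `p_a(0) = 0`,
`p_a(1) = (5a - 3)/60` and `p_a(a) = a⁴(5 - 3a)/60`. At most one coincidence among them can
occur, since `p_a(1) = 0` forces `a = 3/5` where `p_a(a) ≠ 0`; so there are two or three
critical values. The coincidences are `p_a(1) = 0` (`a = 3/5`), `p_a(a) = 0` (`a ∈ {0, 5/3}`)
and `p_a(1) = p_a(a)`, i.e. `(a - 1)³(3a² + 4a + 3) = 0`.
-/

namespace Set

variable {α : Type*} {x y z : α}

lemma ncard_triple_le_three (x y z : α) : ({x, y, z} : Set α).ncard ≤ 3 :=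
  (ncard_insert_le x {y, z}).trans <| by
    grw [ncard_insert_le y {z}, ncard_singleton]

lemma two_le_ncard_triple (h : x ≠ y ∨ x ≠ z) : 2 ≤ ({x, y, z} : Set α).ncard := by
  rcases h with h | h <;>
    exact (ncard_pair h).symm.le.trans (ncard_le_ncard (by intro; aesop))

lemma ncard_triple_eq_three_iff : ({x, y, z} : Set α).ncard = 3 ↔ x ≠ y ∧ x ≠ z ∧ y ≠ z := by
  by_cases hx : x ∈ ({y, z} : Set α)
  · have hyz : ({y, z} : Set α).ncard ≤ 2 := by grw [ncard_insert_le y {z}, ncard_singleton]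
    rw [ncard_insert_of_mem hx]
    simp only [mem_insert_iff, mem_singleton_iff] at hx
    constructor
    · omega
    · tauto
  · simp only [mem_insert_iff, mem_singleton_iff, not_or] at hx
    rw [ncard_insert_of_notMem (by simpa using hx)]
    by_cases hyz : y = z
    · simp [hyz]
    · simp [ncard_pair hyz, hx, hyz]

end Set

lemma derivative_pA (a : ℂ) : derivative (pA a) = X ^ 2 * (X - 1) * (X - C a) :=
  Polynomial.funext fun x => by simp [pA]; ring

lemma criticalValues_pA (a : ℂ) :
    criticalValues (pA a) = {0, (5 * a - 3) / 60, a ^ 4 * (5 - 3 * a) / 60} := by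
  have hroots : {x : ℂ | (pA a).derivative.eval x = 0} = {0, 1, a} := by
    ext x
    simp [derivative_pA, sub_eq_zero, or_assoc]
  rw [criticalValues, hroots, Set.image_insert_eq, Set.image_insert_eq, Set.image_singleton]
  congr 2 <;> simp [pA] <;> ring

lemma criticalValue_one_eq_zero_iff (a : ℂ) : (5 * a - 3) / 60 = 0 ↔ a = 3 / 5 := by
  constructor <;> intro h
  · linear_combination 12 * h
  · linear_combination h / 12

lemma criticalValue_a_eq_zero_iff (a : ℂ) :
    a ^ 4 * (5 - 3 * a) / 60 = 0 ↔ a = 0 ∨ a = 5 / 3 := by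
  have hlin : (5 - 3 * a : ℂ) = 0 ↔ a = 5 / 3 := by
    constructor <;> intro h
    · linear_combination -h / 3
    · linear_combination -3 * h
  simp [hlin]

lemma sq_I_mul_sqrt_five : (Complex.I * Real.sqrt 5) ^ 2 = -5 := by
  rw [mul_pow, Complex.I_sq, ← Complex.ofReal_pow, Real.sq_sqrt (by norm_num)]
  norm_num

lemma criticalValue_one_eq_criticalValue_a_iff (a : ℂ) :
    (5 * a - 3) / 60 = a ^ 4 * (5 - 3 * a) / 60 ↔
      a = 1 ∨ a = (-2 + Complex.I * Real.sqrt 5) / 3 ∨ a = (-2 - Complex.I * Real.sqrt 5) / 3 := by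
  have key : (5 * a - 3) / 60 - a ^ 4 * (5 - 3 * a) / 60 = (a - 1) ^ 3 *
      ((a - (-2 + Complex.I * Real.sqrt 5) / 3) * (a - (-2 - Complex.I * Real.sqrt 5) / 3)) / 20 := by
    linear_combination ((a - 1) ^ 3 / 180) * sq_I_mul_sqrt_five
  rw [← sub_eq_zero, key]
  simp [sub_eq_zero]

lemma criticalValues_pA_nondegenerate (a : ℂ) :
    (0 : ℂ) ≠ (5 * a - 3) / 60 ∨ (0 : ℂ) ≠ a ^ 4 * (5 - 3 * a) / 60 := by
  by_contra! h
  obtain rfl : a = 3 / 5 := (criticalValue_one_eq_zero_iff a).mp h.1.symm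
  norm_num at h

lemma ncard_criticalValues_pA_eq_three_iff (a : ℂ) :
    (criticalValues (pA a)).ncard = 3 ↔
      a ∉ ({0, 1, 3 / 5, 5 / 3, (-2 + Complex.I * Real.sqrt 5) / 3,
        (-2 - Complex.I * Real.sqrt 5) / 3} : Set ℂ) := by
  rw [criticalValues_pA, Set.ncard_triple_eq_three_iff, ne_comm, ne_comm (a := (0 : ℂ)),
    Ne, Ne, Ne, criticalValue_one_eq_zero_iff, criticalValue_a_eq_zero_iff,
    criticalValue_one_eq_criticalValue_a_iff]
  simp only [Set.mem_insert_iff, Set.mem_singleton_iff]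
  tauto

/-- `p_a = ∫ x²(x-1)(x-a) dx` is a Chebyshev polynomial (exactly two distinct critical
values) iff `a ∈ {0, 1, 3/5, 5/3, (-2 ± i√5)/3}`; otherwise it is a Zolotarev polynomial
(exactly three distinct critical values). -/
theorem pA_chebyshev_iff (a : ℂ) :
    ((criticalValues (pA a)).ncard = 2 ↔
      a ∈ ({0, 1, 3 / 5, 5 / 3, (-2 + Complex.I * Real.sqrt 5) / 3,
        (-2 - Complex.I * Real.sqrt 5) / 3} : Set ℂ)) ∧
    (a ∉ ({0, 1, 3 / 5, 5 / 3, (-2 + Complex.I * Real.sqrt 5) / 3,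
        (-2 - Complex.I * Real.sqrt 5) / 3} : Set ℂ) →
      (criticalValues (pA a)).ncard = 3) := by
  have h3 := ncard_criticalValues_pA_eq_three_iff a
  have hle : (criticalValues (pA a)).ncard ≤ 3 := by
    rw [criticalValues_pA]; exact Set.ncard_triple_le_three ..
  have hge : 2 ≤ (criticalValues (pA a)).ncard := by
    rw [criticalValues_pA]; exact Set.two_le_ncard_triple (criticalValues_pA_nondegenerate a)
  refine ⟨⟨fun h2 => ?_, fun ha => ?_⟩, h3.mpr⟩
  · by_contra ha
    have := h3.mpr ha
    omega
  · have : (criticalValues (pA a)).ncard ≠ 3 := fun h => h3.mp h ha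
    omega
end

section
/- For λ ∈ [0,1] let p_λ = X⁵/5 − (1 + 3λ/5)X⁴/4 + (3λ/5)X³/3 (an antiderivative of X²(X−1)(X−3λ/5)). Then: (i) p_0 has exactly two distinct critical values, namely 0 and −1/20, and the multiset of root multiplicities of p_0 − 0 is {4,1} while that of p_0 + 1/20 is {2,1,1,1}; (ii) p_1 has exactly two distinct critical values, namely 0 and (3/5)⁴·(16/5)/60, and the multiset of root multiplicities of p_1 − 0 is {3,2} while that of p_1 over its other critical value is {2,1,1,1}; (iii) for every λ ∈ (0,1), p_λ has exactly three distinct critical values. (This family is a Z-homotopy between the 5-edge trees T_1 and T_2.) -/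
/-!
The derivative of `p_λ` is `X²(X - 1)(X - c)` with `c = 3λ/5`, so the critical values are
`p_λ(0) = 0`, `p_λ(1) = (λ - 1)/20` and `p_λ(c) = c⁴(5 - 3c)/60`: for `0 < λ < 1` one is zero, one
negative and one positive. At `λ = 0` and `λ = 1` two critical points share the value `0`, and
`p_λ` factors explicitly as `X⁴(X - 5/4)/5` resp. `X³(X - 1)²/5`. The remaining critical value
is attained at a single critical point, where `p''` does not vanish; so that fiber has exactly one
double root and its other roots are simple.
-/

open Polynomial

theorem Polynomial.rootMultiplicity_eq_two {R : Type*} [CommRing R] [IsDomain R] [CharZero R]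
    {p : R[X]} {a : R} (hp : p ≠ 0) (h₀ : p.IsRoot a) (h₁ : (derivative p).IsRoot a)
    (h₂ : ¬ (derivative (derivative p)).IsRoot a) : p.rootMultiplicity a = 2 := by
  refine le_antisymm (not_lt.mp fun h => h₂ ?_)
    ((one_lt_rootMultiplicity_iff_isRoot hp).mpr ⟨h₀, h₁⟩)
  exact (lt_rootMultiplicity_iff_isRoot_iterate_derivative hp).mp h 2 le_rfl

theorem Polynomial.map_rootMultiplicity_eq_cons_two_replicate_one {k : Type*} [Field k]
    [IsAlgClosed k] [DecidableEq k] {q : k[X]} {a : k} (ha : q.rootMultiplicity a = 2)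
    (hsimple : ∀ x ∈ q.roots, x ≠ a → q.rootMultiplicity x = 1) :
    q.roots.toFinset.val.map (fun x => q.rootMultiplicity x) =
      2 ::ₘ Multiset.replicate (q.natDegree - 2) 1 := by
  have hq : q ≠ 0 := by
    rintro rfl
    simp at ha
  have hmem : a ∈ q.roots.toFinset :=
    Multiset.mem_toFinset.mpr ((mem_roots hq).mpr ((rootMultiplicity_pos hq).mp (by omega)))
  have hsimple' : ∀ x ∈ q.roots.toFinset.erase a, q.rootMultiplicity x = 1 := fun x hx =>
    hsimple x (Multiset.mem_toFinset.mp (Finset.mem_of_mem_erase hx)) (Finset.ne_of_mem_erase hx)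
  have hdeg : q.natDegree = 2 + (q.roots.toFinset.erase a).card := by
    rw [← IsAlgClosed.card_roots_eq_natDegree, ← Multiset.toFinset_sum_count_eq,
      ← Finset.add_sum_erase _ _ hmem]
    simp only [count_roots, ha, Finset.sum_congr rfl hsimple', Finset.card_eq_sum_ones]
  rw [← Finset.insert_erase hmem, Finset.insert_val_of_notMem (Finset.notMem_erase a _),
    Multiset.map_cons, ha, Multiset.map_congr rfl hsimple', Multiset.map_const', Finset.card_val,
    hdeg, Nat.add_sub_cancel_left]

theorem fiberMults_eq_pair {p : ℂ[X]} {α c a b : ℂ} {k l : ℕ} (hc : c ≠ 0) (hab : a ≠ b)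
    (hk : k ≠ 0) (hl : l ≠ 0) (hp : p - C α = C c * ((X - C a) ^ k * (X - C b) ^ l)) :
    fiberMults p α = {k, l} := by
  have hroots : (p - C α).roots = Multiset.replicate k a + Multiset.replicate l b := by
    rw [hp, roots_C_mul _ hc, roots_mul (mul_ne_zero (pow_ne_zero _ (X_sub_C_ne_zero a))
      (pow_ne_zero _ (X_sub_C_ne_zero b))), roots_pow, roots_pow, roots_X_sub_C,
      roots_X_sub_C, Multiset.nsmul_singleton, Multiset.nsmul_singleton]
  have hsupp : (p - C α).roots.toFinset = {a, b} := by
    ext x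
    simp [hroots, hk, hl]
  rw [fiberMults, hsupp, Finset.insert_val_of_notMem (by simpa using hab), Multiset.map_cons,
    Finset.singleton_val, Multiset.map_singleton, ← count_roots, ← count_roots, hroots]
  simp [Multiset.count_replicate, hab, hab.symm]

theorem fiberMults_eval_of_nondegenerate {p : ℂ[X]} {a : ℂ} (h₁ : (derivative p).IsRoot a)
    (h₂ : ¬ (derivative (derivative p)).IsRoot a)
    (hcrit : ∀ x, (derivative p).IsRoot x → p.eval x = p.eval a → x = a) :
    fiberMults p (p.eval a) = 2 ::ₘ Multiset.replicate (p.natDegree - 2) 1 := by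
  have hq' : derivative (p - C (p.eval a)) = derivative p := by simp
  have hq : p - C (p.eval a) ≠ 0 := fun h => h₂ (by simp [← hq', h])
  rw [fiberMults, ← natDegree_sub_C (a := p.eval a)]
  refine map_rootMultiplicity_eq_cons_two_replicate_one
    (rootMultiplicity_eq_two (a := a) hq (by simp) (by rwa [hq']) (by rwa [hq']))
    fun x hx hxa => ?_
  have hroot := (mem_roots hq).mp hx
  refine le_antisymm (not_lt.mp fun hlt => hxa ?_) ((rootMultiplicity_pos hq).mpr hroot)
  rw [one_lt_rootMultiplicity_iff_isRoot hq, hq'] at hlt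
  exact hcrit x hlt.2 (by simpa [sub_eq_zero] using hroot)

noncomputable def homotopyPoly (t : ℝ) : ℂ[X] :=
  C (1 / 5) * X ^ 5 - C ((1 + 3 * (t : ℂ) / 5) / 4) * X ^ 4 + C ((3 * (t : ℂ) / 5) / 3) * X ^ 3

namespace homotopyPoly

variable (t : ℝ)

theorem eval_eq (x : ℂ) :
    (homotopyPoly t).eval x = x ^ 5 / 5 - (1 + 3 * t / 5) / 4 * x ^ 4 + t / 5 * x ^ 3 := by
  simp [homotopyPoly]
  ring

theorem derivative_eq :
    derivative (homotopyPoly t) = X ^ 2 * (X - 1) * (X - C (3 * t / 5 : ℂ)) := by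
  refine Polynomial.funext fun x => ?_
  simp [homotopyPoly]
  ring

theorem natDegree_eq : (homotopyPoly t).natDegree = 5 := by
  unfold homotopyPoly
  compute_degree!

theorem isRoot_derivative_iff {x : ℂ} :
    (derivative (homotopyPoly t)).IsRoot x ↔ x = 0 ∨ x = 1 ∨ x = 3 * t / 5 := by
  simp [derivative_eq, sub_eq_zero, or_assoc]

theorem criticalValues_eq :
    criticalValues (homotopyPoly t) =
      {0, (((t - 1) / 20 : ℝ) : ℂ), (((3 * t / 5) ^ 4 * (5 - 9 * t / 5) / 60 : ℝ) : ℂ)} := by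
  have hcrit : {x : ℂ | (derivative (homotopyPoly t)).eval x = 0} = {0, 1, 3 * (t : ℂ) / 5} :=
    Set.ext fun x => isRoot_derivative_iff t
  rw [criticalValues, hcrit, Set.image_insert_eq, Set.image_insert_eq, Set.image_singleton]
  simp only [eval_eq]
  push_cast
  ring_nf

theorem ncard_criticalValues_of_mem_Ioo {t : ℝ} (ht : t ∈ Set.Ioo 0 1) :
    (criticalValues (homotopyPoly t)).ncard = 3 := by
  obtain ⟨ht₀, ht₁⟩ := ht
  have h₁ : (t - 1) / 20 < 0 := by linarith
  have h₂ : 0 < (3 * t / 5) ^ 4 * (5 - 9 * t / 5) / 60 := by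
    have : 0 < 5 - 9 * t / 5 := by linarith
    positivity
  rw [criticalValues_eq, Set.ncard_eq_three]
  exact ⟨_, _, _, by exact_mod_cast h₁.ne', by exact_mod_cast h₂.ne,
    by exact_mod_cast (h₁.trans h₂).ne, rfl⟩

theorem criticalValues_zero : criticalValues (homotopyPoly 0) = {0, -1 / 20} := by
  rw [criticalValues_eq]
  norm_num [Set.pair_comm]

theorem criticalValues_one :
    criticalValues (homotopyPoly 1) = {0, (3 / 5) ^ 4 * (16 / 5) / 60} := by
  rw [criticalValues_eq]
  norm_num

theorem fiberMults_zero_zero : fiberMults (homotopyPoly 0) 0 = {4, 1} := by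
  refine fiberMults_eq_pair (c := 1 / 5) (a := 0) (b := 5 / 4) (by norm_num) (by norm_num)
    (by norm_num) (by norm_num) (Polynomial.funext fun x => ?_)
  simp [eval_eq]
  ring

theorem fiberMults_one_zero : fiberMults (homotopyPoly 1) 0 = {3, 2} := by
  refine fiberMults_eq_pair (c := 1 / 5) (a := 0) (b := 1) (by norm_num) (by norm_num)
    (by norm_num) (by norm_num) (Polynomial.funext fun x => ?_)
  simp [eval_eq]
  ring

theorem fiberMults_zero_neg_one_div_twenty :
    fiberMults (homotopyPoly 0) (-1 / 20) = {2, 1, 1, 1} := by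
  have hval : (homotopyPoly 0).eval 1 = -1 / 20 := by norm_num [eval_eq]
  rw [← hval, fiberMults_eval_of_nondegenerate, natDegree_eq]
  · rfl
  · exact (isRoot_derivative_iff _).mpr (by norm_num)
  · norm_num [derivative_eq]
  · intro x hx hx'
    rcases (isRoot_derivative_iff 0).mp hx with rfl | rfl | rfl <;> norm_num [eval_eq] at *

theorem fiberMults_one_nonzero_criticalValue :
    fiberMults (homotopyPoly 1) ((3 / 5) ^ 4 * (16 / 5) / 60) = {2, 1, 1, 1} := by
  have hval : (homotopyPoly 1).eval (3 / 5) = (3 / 5) ^ 4 * (16 / 5) / 60 := by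
    norm_num [eval_eq]
  rw [← hval, fiberMults_eval_of_nondegenerate, natDegree_eq]
  · rfl
  · exact (isRoot_derivative_iff _).mpr (by norm_num)
  · norm_num [derivative_eq]
  · intro x hx hx'
    rcases (isRoot_derivative_iff 1).mp hx with rfl | rfl | rfl <;> norm_num [eval_eq] at *

end homotopyPoly

/-- The family `p_λ = ∫ x²(x-1)(x-3λ/5) dx` is a Z-homotopy between
the 5-edge trees `T₁` and `T₂`. -/
theorem Zhomotopy_T1_T2 :
    let p : ℝ → ℂ[X] := fun t =>
      C (1 / 5) * X ^ 5 - C ((1 + 3 * (t : ℂ) / 5) / 4) * X ^ 4 + C ((3 * (t : ℂ) / 5) / 3) * X ^ 3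
    ((0 : ℂ) ≠ -1 / 20 ∧ criticalValues (p 0) = {0, -1 / 20} ∧
      fiberMults (p 0) 0 = {4, 1} ∧ fiberMults (p 0) (-1 / 20) = {2, 1, 1, 1}) ∧
    ((0 : ℂ) ≠ (3 / 5) ^ 4 * (16 / 5) / 60 ∧
      criticalValues (p 1) = {0, (3 / 5) ^ 4 * (16 / 5) / 60} ∧
      fiberMults (p 1) 0 = {3, 2} ∧
      fiberMults (p 1) ((3 / 5) ^ 4 * (16 / 5) / 60) = {2, 1, 1, 1}) ∧
    (∀ t ∈ Set.Ioo (0 : ℝ) 1, (criticalValues (p t)).ncard = 3) := by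
  open homotopyPoly in
  exact ⟨⟨by norm_num, criticalValues_zero, fiberMults_zero_zero,
      fiberMults_zero_neg_one_div_twenty⟩,
    ⟨by norm_num, criticalValues_one, fiberMults_one_zero, fiberMults_one_nonzero_criticalValue⟩,
    fun _ => ncard_criticalValues_of_mem_Ioo⟩
end

section
/- For λ ∈ [0,1] let a(λ) = 1 + 2λ/3 and p_λ = X⁵/5 − (1 + a(λ))X⁴/4 + a(λ)X³/3 (an antiderivative of X²(X−1)(X−a(λ))). Then: (i) p_0 (where a = 1) has exactly two distinct critical values, namely 0 and 1/30, and the multisets of root multiplicities of p_0 − 0 and of p_0 − 1/30 are both {3,1,1}; (ii) p_1 (where a = 5/3) has exactly two distinct critical values, namely 0 and p_1(1) = (5·(5/3) − 3)/60, the multiset of root multiplicities of p_1 − 0 is {3,2} and that over the other critical value is {2,1,1,1}; (iii) for every λ ∈ (0,1), p_λ has exactly three distinct critical values. (This family is a Z-homotopy between the 5-edge trees T_3 and T_2.) -/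
/-!
Write `p_a` (`quintic a`) for the primitive of `X²(X - 1)(X - a)` vanishing at `0`, so that the family is
`p_{a(λ)}`. Its critical values are `p_a(0) = 0`, `p_a(1) = (5a - 3)/60` and
`p_a(a) = a⁴(5 - 3a)/60`. For `1 < a < 5/3` they are pairwise distinct, because
`(5a - 3) - a⁴(5 - 3a) = (a - 1)³(3a² + 4a + 3)`; at `a = 1` the last two collide and at
`a = 5/3` the first and the last. The fibres over the critical values of `p_1` and `p_{5/3}` are
read off from factorisations `p_a - α = c (X - x)ᵐ q` with `q(x) ≠ 0`: when `q` is separable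
(a quadratic with nonzero discriminant, or a cubic coprime to its derivative), the root
multiplicities are `m` followed by `deg q` ones.
-/

open Polynomial

namespace Multiset

variable {α : Type*} [DecidableEq α]

theorem map_count_dedup_replicate_add {m : ℕ} {x : α} {t : Multiset α} (hm : m ≠ 0)
    (hx : x ∉ t) :
    (replicate m x + t).dedup.map (replicate m x + t).count = m ::ₘ t.dedup.map t.count := by
  have hsupp : (replicate m x + t).toFinset = insert x t.toFinset := by
    ext w; simp [hm]
  rw [← toFinset_val, hsupp, Finset.insert_val_of_notMem (by simpa using hx), map_cons,
    toFinset_val, count_add, count_replicate_self, count_eq_zero_of_notMem hx, add_zero]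
  congr 1
  refine map_congr rfl fun w hw => ?_
  have hwx : w ≠ x := fun h => hx (h ▸ mem_dedup.mp hw)
  rw [count_add, count_replicate, if_neg hwx.symm, zero_add]

theorem map_count_dedup_replicate {m : ℕ} {x : α} (hm : m ≠ 0) :
    (replicate m x).dedup.map (replicate m x).count = {m} := by
  simpa using map_count_dedup_replicate_add (t := 0) hm (notMem_zero x)

theorem Nodup.map_count_dedup {t : Multiset α} (ht : t.Nodup) :
    t.dedup.map t.count = replicate (card t) 1 := by
  rw [ht.dedup, map_congr rfl fun w hw => count_eq_one_of_mem ht hw, map_const']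

end Multiset

namespace Polynomial

theorem roots_C_mul_X_sub_C_pow_mul {R : Type*} [CommRing R] [IsDomain R] {c x : R} {m : ℕ}
    {q : R[X]} (hc : c ≠ 0) (hq : q ≠ 0) :
    (C c * ((X - C x) ^ m * q)).roots = Multiset.replicate m x + q.roots := by
  rw [roots_C_mul _ hc, roots_mul (mul_ne_zero (pow_ne_zero _ (X_sub_C_ne_zero x)) hq),
    roots_pow, roots_X_sub_C, Multiset.nsmul_singleton]

theorem separable_quadratic {K : Type*} [Field K] {a b c : K} (h : b ^ 2 - 4 * a * c ≠ 0) :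
    (C a * X ^ 2 + C b * X + C c).Separable := by
  have hbezout : C (-4 * a) * (C a * X ^ 2 + C b * X + C c)
      + (C (2 * a) * X + C b) * derivative (C a * X ^ 2 + C b * X + C c)
      = C (b ^ 2 - 4 * a * c) := by
    simp only [derivative_add, derivative_C_mul_X_pow, derivative_C_mul_X, derivative_C,
      map_mul, map_sub, map_pow, map_neg, Nat.cast_ofNat, map_ofNat]
    ring
  refine (separable_def' _).mpr
    ⟨C (b ^ 2 - 4 * a * c)⁻¹ * C (-4 * a), C (b ^ 2 - 4 * a * c)⁻¹ * (C (2 * a) * X + C b), ?_⟩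
  calc _ = C (b ^ 2 - 4 * a * c)⁻¹ * C (b ^ 2 - 4 * a * c) := by rw [← hbezout]; ring
    _ = 1 := by rw [← C_mul, inv_mul_cancel₀ h, C_1]

end Polynomial

theorem fiberMults_eq_map_count (p : ℂ[X]) (α : ℂ) :
    fiberMults p α = (p - C α).roots.dedup.map (p - C α).roots.count := by
  rw [fiberMults, Multiset.toFinset_val]
  exact Multiset.map_congr rfl fun x _ => (count_roots _).symm

theorem fiberMults_eq_cons {p q : ℂ[X]} {α c x : ℂ} {m : ℕ} (hc : c ≠ 0) (hm : m ≠ 0)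
    (hq : q ≠ 0) (hqx : ¬q.IsRoot x) (h : p - C α = C c * ((X - C x) ^ m * q)) :
    fiberMults p α = m ::ₘ q.roots.dedup.map q.roots.count := by
  rw [fiberMults_eq_map_count, h, roots_C_mul_X_sub_C_pow_mul hc hq]
  exact Multiset.map_count_dedup_replicate_add hm fun hx => hqx (isRoot_of_mem_roots hx)

theorem fiberMults_eq_cons_replicate_one {p q : ℂ[X]} {α c x : ℂ} {m : ℕ} (hc : c ≠ 0)
    (hm : m ≠ 0) (hq : q.Separable) (hqx : ¬q.IsRoot x)
    (h : p - C α = C c * ((X - C x) ^ m * q)) :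
    fiberMults p α = m ::ₘ Multiset.replicate q.natDegree 1 := by
  rw [fiberMults_eq_cons hc hm hq.ne_zero hqx h, (nodup_roots hq).map_count_dedup,
    IsAlgClosed.card_roots_eq_natDegree]

noncomputable def quintic (a : ℂ) : ℂ[X] :=
  C (1 / 5) * X ^ 5 - C ((1 + a) / 4) * X ^ 4 + C (a / 3) * X ^ 3

theorem derivative_quintic (a : ℂ) : derivative (quintic a) = X ^ 2 * (X - 1) * (X - C a) := by
  apply Polynomial.funext
  intro x
  simp [quintic]
  ring

theorem criticalValues_quintic (a : ℂ) :
    criticalValues (quintic a) = {0, (5 * a - 3) / 60, a ^ 4 * (5 - 3 * a) / 60} := by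
  have hcrit : {x : ℂ | (derivative (quintic a)).eval x = 0} = {0, 1, a} := by
    ext x
    simp [derivative_quintic, sub_eq_zero, or_assoc]
  rw [criticalValues, hcrit, Set.image_insert_eq, Set.image_insert_eq, Set.image_singleton]
  congr 2 <;> simp [quintic] <;> ring

theorem quintic_eval_one (a : ℂ) : (quintic a).eval 1 = (5 * a - 3) / 60 := by
  simp [quintic]
  ring

theorem fiberMults_quintic_one_zero : fiberMults (quintic 1) 0 = {3, 1, 1} := by
  have hfac : quintic 1 - C 0
      = C (1 / 30) * ((X - C 0) ^ 3 * (C 6 * X ^ 2 + C (-15) * X + C 10)) := by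
    apply Polynomial.funext; intro x; simp [quintic]; ring
  rw [fiberMults_eq_cons_replicate_one (by norm_num) three_ne_zero
    (separable_quadratic (by norm_num)) (by simp) hfac, natDegree_quadratic (by norm_num)]
  rfl

theorem fiberMults_quintic_one_one_div_thirty : fiberMults (quintic 1) (1 / 30) = {3, 1, 1} := by
  have hfac : quintic 1 - C (1 / 30)
      = C (1 / 30) * ((X - C 1) ^ 3 * (C 6 * X ^ 2 + C 3 * X + C 1)) := by
    apply Polynomial.funext; intro x; simp [quintic]; ring
  rw [fiberMults_eq_cons_replicate_one (by norm_num) three_ne_zero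
    (separable_quadratic (by norm_num)) (by norm_num) hfac, natDegree_quadratic (by norm_num)]
  rfl

theorem fiberMults_quintic_five_div_three_zero : fiberMults (quintic (5 / 3)) 0 = {3, 2} := by
  have hfac : quintic (5 / 3) - C 0 = C (1 / 5) * ((X - C 0) ^ 3 * (X - C (5 / 3)) ^ 2) := by
    apply Polynomial.funext; intro x; simp [quintic]; ring
  rw [fiberMults_eq_cons (by norm_num) three_ne_zero (pow_ne_zero _ (X_sub_C_ne_zero _))
    (by norm_num) hfac, roots_pow, roots_X_sub_C, Multiset.nsmul_singleton,
    Multiset.map_count_dedup_replicate two_ne_zero]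
  rfl

theorem fiberMults_quintic_five_div_three_four_div_fortyfive :
    fiberMults (quintic (5 / 3)) (4 / 45) = {2, 1, 1, 1} := by
  set g : ℂ[X] := C 9 * X ^ 3 + C (-12) * X ^ 2 + C (-8) * X + C (-4)
  have hfac : quintic (5 / 3) - C (4 / 45) = C (1 / 45) * ((X - C 1) ^ 2 * g) := by
    apply Polynomial.funext; intro x; simp [quintic, g]; ring
  have hsep : g.Separable := by
    refine (separable_def' g).mpr ⟨C (-53 / 180) + C (1 / 5) * X,
      C (1 / 45) + C (23 / 180) * X - C (1 / 15) * X ^ 2, ?_⟩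
    apply Polynomial.funext; intro x; simp [g]; ring
  rw [fiberMults_eq_cons_replicate_one (by norm_num) two_ne_zero hsep (by norm_num [g]) hfac,
    natDegree_cubic (by norm_num)]
  rfl

theorem ncard_criticalValues_quintic_ofReal {a : ℝ} (h1 : 1 < a) (h2 : a < 5 / 3) :
    (criticalValues (quintic a)).ncard = 3 := by
  have hv1 : 0 < (5 * a - 3) / 60 := by linarith
  have hv2 : 0 < a ^ 4 * (5 - 3 * a) / 60 := by
    have : 0 < 5 - 3 * a := by linarith
    positivity
  have hv12 : a ^ 4 * (5 - 3 * a) / 60 < (5 * a - 3) / 60 := by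
    have hfactor : (5 * a - 3) - a ^ 4 * (5 - 3 * a) = (a - 1) ^ 3 * (3 * a ^ 2 + 4 * a + 3) := by
      ring
    have : 0 < (a - 1) ^ 3 * (3 * a ^ 2 + 4 * a + 3) := by
      have : 0 < a - 1 := by linarith
      positivity
    linarith
  rw [criticalValues_quintic, Set.ncard_eq_three]
  refine ⟨_, _, _, ?_, ?_, ?_, rfl⟩ <;> norm_cast
  · exact hv1.ne
  · exact hv2.ne
  · exact hv12.ne'

/-- The family `p_λ = ∫ x²(x-1)(x-a(λ)) dx` with `a(λ) = 1 + 2λ/3` is a Z-homotopy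
between the 5-edge trees `T₃` and `T₂`. -/
theorem Zhomotopy_T3_T2 :
    let a : ℝ → ℂ := fun t => 1 + 2 * (t : ℂ) / 3
    let p : ℝ → ℂ[X] := fun t =>
      C (1 / 5) * X ^ 5 - C ((1 + a t) / 4) * X ^ 4 + C (a t / 3) * X ^ 3
    ((0 : ℂ) ≠ 1 / 30 ∧ criticalValues (p 0) = {0, 1 / 30} ∧
      fiberMults (p 0) 0 = {3, 1, 1} ∧ fiberMults (p 0) (1 / 30) = {3, 1, 1}) ∧
    ((p 1).eval 1 = (5 * (5 / 3) - 3) / 60 ∧ (0 : ℂ) ≠ (p 1).eval 1 ∧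
      criticalValues (p 1) = {0, (p 1).eval 1} ∧
      fiberMults (p 1) 0 = {3, 2} ∧ fiberMults (p 1) ((p 1).eval 1) = {2, 1, 1, 1}) ∧
    (∀ t ∈ Set.Ioo (0 : ℝ) 1, (criticalValues (p t)).ncard = 3) := by
  intro a p
  have hp : ∀ t, p t = quintic (a t) := fun _ => rfl
  have hp0 : p 0 = quintic 1 := by norm_num [hp, a]
  have hp1 : p 1 = quintic (5 / 3) := by norm_num [hp, a]
  have hval : (p 1).eval 1 = 4 / 45 := by rw [hp1, quintic_eval_one]; norm_num
  refine ⟨⟨by norm_num, ?_, ?_, ?_⟩, ⟨by rw [hval]; norm_num, by rw [hval]; norm_num, ?_, ?_, ?_⟩,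
    fun t ht => ?_⟩
  · rw [hp0, criticalValues_quintic]; norm_num
  · rw [hp0, fiberMults_quintic_one_zero]
  · rw [hp0, fiberMults_quintic_one_one_div_thirty]
  · rw [hval, hp1, criticalValues_quintic]
    norm_num [Set.pair_comm]
  · rw [hp1, fiberMults_quintic_five_div_three_zero]
  · rw [hval, hp1, fiberMults_quintic_five_div_three_four_div_fortyfive]
  · have hat : a t = ((1 + 2 * t / 3 : ℝ) : ℂ) := by push_cast [a]; rfl
    rw [hp, hat]
    exact ncard_criticalValues_quintic_ofReal (by linarith [ht.1]) (by linarith [ht.2])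
end

section
/- Let a = √5, b = 1 + √5, and p = X⁵/5 − (1+a+b)X⁴/4 + (a+b+ab)X³/3 − (ab/2)X² (an antiderivative of X(X−1)(X−a)(X−b) vanishing at 0). Then b = (3a² − 5a)/(5a − 10), p(√5) = 0 = p(0), p(1) = p(1+√5) ≠ 0, p has exactly two distinct critical values 0 and p(1), and the multiset of root multiplicities of p − γ equals {2,2,1} for each critical value γ of p. (Thus p is a Chebyshev polynomial defining the 5-edge chain T_5.) -/
open Polynomial

/-! Since `p' = x(x - 1)(x - a)(x - b)`, the critical points are `0, 1, a, b`. When `a² = 5` and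
`b = 1 + a`, the polynomial factors as `p = x²(x - a)²(x - (5 + a)/2)/5` and
`p + 4/5 = (x - 1)²(x - b)²(x - (a - 3)/2)/5`. So the critical points pair up as the double roots
of the two fibers over `0` and `-4/5`, and the third root of each fiber is simple. -/

lemma criticalValues_eq_image_of_derivative_eq_prod {p : ℂ[X]} {s : Multiset ℂ}
    (h : derivative p = (s.map fun r => X - C r).prod) :
    criticalValues p = (fun x => p.eval x) '' {x | x ∈ s} := by
  have hne : derivative p ≠ 0 := h ▸ (monic_multiset_prod_of_monic _ _
    fun r _ => monic_X_sub_C r).ne_zero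
  have hroots : (derivative p).roots = s := h ▸ roots_multiset_prod_X_sub_C s
  ext y
  simp only [criticalValues, Set.mem_image, Set.mem_ofPred_eq, ← hroots, mem_roots hne,
    IsRoot.def]

lemma roots_C_mul_sq_mul_sq_mul {R : Type*} [CommRing R] [IsDomain R] {c : R} (hc : c ≠ 0)
    (α β γ : R) :
    (C c * ((X - C α) ^ 2 * ((X - C β) ^ 2 * (X - C γ)))).roots = {α, α, β, β, γ} := by
  have hβγ : (X - C β) ^ 2 * (X - C γ) ≠ 0 := mul_ne_zero (pow_ne_zero _ (X_sub_C_ne_zero β))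
    (X_sub_C_ne_zero γ)
  rw [roots_C_mul _ hc, roots_mul (mul_ne_zero (pow_ne_zero _ (X_sub_C_ne_zero α)) hβγ),
    roots_mul hβγ, roots_pow, roots_pow, roots_X_sub_C, roots_X_sub_C, roots_X_sub_C,
    two_nsmul, two_nsmul]
  rfl

lemma eval_eq_of_mem_roots_sub {R : Type*} [CommRing R] [IsDomain R] {p : R[X]} {v x : R}
    (h : x ∈ (p - C v).roots) : p.eval x = v := by
  simpa [sub_eq_zero] using (mem_roots'.1 h).2

lemma fiberMults_eq_of_roots_eq {p : ℂ[X]} {v α β γ : ℂ}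
    (h : (p - C v).roots = {α, α, β, β, γ}) (hαβ : α ≠ β) (hαγ : α ≠ γ) (hβγ : β ≠ γ) :
    fiberMults p v = {2, 2, 1} := by
  have hdedup : (p - C v).roots.toFinset.val = {α, β, γ} := by
    rw [h, Multiset.toFinset_val]
    simp [Multiset.dedup_cons_of_notMem, hαβ, hαγ, hβγ]
  rw [fiberMults, hdedup]
  simp [← count_roots, h, Multiset.count_cons, hαβ, hαγ, hβγ, hαβ.symm, hαγ.symm, hβγ.symm]

noncomputable def quinticAntideriv (a b : ℂ) : ℂ[X] :=
  C (1 / 5) * X ^ 5 - C ((1 + a + b) / 4) * X ^ 4 + C ((a + b + a * b) / 3) * X ^ 3 -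
    C (a * b / 2) * X ^ 2

lemma derivative_quinticAntideriv (a b : ℂ) :
    derivative (quinticAntideriv a b) =
      (({0, 1, a, b} : Multiset ℂ).map fun r => X - C r).prod := by
  apply Polynomial.funext
  intro x
  simp only [quinticAntideriv, derivative_sub, derivative_add, derivative_C_mul,
    derivative_X_pow, Multiset.insert_eq_cons, Multiset.map_cons, Multiset.map_singleton,
    Multiset.prod_cons, Multiset.prod_singleton, eval_mul, eval_add, eval_sub, eval_pow, eval_C,
    eval_X]
  push_cast
  ring

lemma roots_quinticAntideriv_sub_zero {a : ℂ} (ha : a ^ 2 = 5) :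
    (quinticAntideriv a (1 + a) - C 0).roots = {0, 0, a, a, (5 + a) / 2} := by
  rw [← roots_C_mul_sq_mul_sq_mul (by norm_num : (1 / 5 : ℂ) ≠ 0)]
  congr 1
  apply Polynomial.funext
  intro x
  simp only [quinticAntideriv, eval_mul, eval_add, eval_sub, eval_pow, eval_C, eval_X]
  linear_combination (-x ^ 3 / 15 + a * x ^ 2 / 10) * ha

lemma roots_quinticAntideriv_sub_neg_four_fifths {a : ℂ} (ha : a ^ 2 = 5) :
    (quinticAntideriv a (1 + a) - C (-4 / 5)).roots = {1, 1, 1 + a, 1 + a, (a - 3) / 2} := by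
  rw [← roots_C_mul_sq_mul_sq_mul (by norm_num : (1 / 5 : ℂ) ≠ 0)]
  congr 1
  apply Polynomial.funext
  intro x
  simp only [quinticAntideriv, eval_mul, eval_add, eval_sub, eval_pow, eval_C, eval_X]
  linear_combination (-x ^ 3 / 15 + (a + 2) * x ^ 2 / 10 - (1 + a) * x / 5 + (a - 1) / 10) * ha

lemma ne_of_sq_eq_of_sq_ne {M : Type*} [Monoid M] {a q c : M} (ha : a ^ 2 = c) (hq : q ^ 2 ≠ c) :
    a ≠ q :=
  fun h => hq (h ▸ ha)

lemma fiberMults_quinticAntideriv_zero {a : ℂ} (ha : a ^ 2 = 5) :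
    fiberMults (quinticAntideriv a (1 + a)) 0 = {2, 2, 1} := by
  refine fiberMults_eq_of_roots_eq (roots_quinticAntideriv_sub_zero ha) ?_ ?_ ?_
  · exact (ne_of_sq_eq_of_sq_ne ha (q := 0) (by norm_num)).symm
  · intro h
    exact ne_of_sq_eq_of_sq_ne ha (q := -5) (by norm_num) (by linear_combination -2 * h)
  · intro h
    exact ne_of_sq_eq_of_sq_ne ha (q := 5) (by norm_num) (by linear_combination 2 * h)

lemma fiberMults_quinticAntideriv_neg_four_fifths {a : ℂ} (ha : a ^ 2 = 5) :
    fiberMults (quinticAntideriv a (1 + a)) (-4 / 5) = {2, 2, 1} := by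
  refine fiberMults_eq_of_roots_eq (roots_quinticAntideriv_sub_neg_four_fifths ha) ?_ ?_ ?_
  · intro h
    exact ne_of_sq_eq_of_sq_ne ha (q := 0) (by norm_num) (by linear_combination -h)
  · intro h
    exact ne_of_sq_eq_of_sq_ne ha (q := 5) (by norm_num) (by linear_combination -2 * h)
  · intro h
    exact ne_of_sq_eq_of_sq_ne ha (q := -5) (by norm_num) (by linear_combination 2 * h)

/-- For `a = √5`, `b = 1 + √5`, the polynomial `p = ∫ x(x-1)(x-a)(x-b) dx` is a Chebyshev
polynomial defining the 5-edge chain `T₅`: its critical values are `0` and `p(1)`, and the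
fiber multiplicity multiset over each critical value is `{2,2,1}`. -/
theorem chebyshev_chain_T5 :
    let a : ℂ := (Real.sqrt 5 : ℂ)
    let b : ℂ := 1 + (Real.sqrt 5 : ℂ)
    let p : ℂ[X] := C (1 / 5) * X ^ 5 - C ((1 + a + b) / 4) * X ^ 4 +
      C ((a + b + a * b) / 3) * X ^ 3 - C (a * b / 2) * X ^ 2
    b = (3 * a ^ 2 - 5 * a) / (5 * a - 10) ∧
    p.eval a = 0 ∧ p.eval 0 = 0 ∧
    p.eval 1 = p.eval b ∧ p.eval 1 ≠ 0 ∧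
    criticalValues p = {0, p.eval 1} ∧
    (∀ γ ∈ criticalValues p, fiberMults p γ = {2, 2, 1}) := by
  intro a b p
  have ha : a ^ 2 = 5 := by simp only [a, ← Complex.ofReal_pow]; norm_num
  have hroots₀ : (p - C 0).roots = {0, 0, a, a, (5 + a) / 2} :=
    roots_quinticAntideriv_sub_zero ha
  have hroots₁ : (p - C (-4 / 5)).roots = {1, 1, b, b, (a - 3) / 2} :=
    roots_quinticAntideriv_sub_neg_four_fifths ha
  have hp₀ : p.eval 0 = 0 := eval_eq_of_mem_roots_sub (by rw [hroots₀]; simp)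
  have hpa : p.eval a = 0 := eval_eq_of_mem_roots_sub (by rw [hroots₀]; simp)
  have hp₁ : p.eval 1 = -4 / 5 := eval_eq_of_mem_roots_sub (by rw [hroots₁]; simp)
  have hpb : p.eval b = -4 / 5 := eval_eq_of_mem_roots_sub (by rw [hroots₁]; simp)
  have hcv : criticalValues p = {0, p.eval 1} := by
    have himage :
        criticalValues p = (fun x => p.eval x) '' {x | x ∈ ({0, 1, a, b} : Multiset ℂ)} :=
      criticalValues_eq_image_of_derivative_eq_prod (derivative_quinticAntideriv a b)
    ext y
    simp only [himage, Set.mem_image, Set.mem_ofPred_eq, Multiset.insert_eq_cons,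
      Multiset.mem_cons, Multiset.mem_singleton]
    grind
  have hden : 5 * a - 10 ≠ 0 := fun h =>
    ne_of_sq_eq_of_sq_ne ha (q := 2) (by norm_num) (by linear_combination h / 5)
  refine ⟨by rw [eq_div_iff hden]; linear_combination 2 * ha, hpa, hp₀, hp₁.trans hpb.symm,
    by rw [hp₁]; norm_num, hcv, ?_⟩
  rw [hcv, hp₁]
  rintro γ (rfl | rfl)
  · exact fiberMults_quinticAntideriv_zero ha
  · exact fiberMults_quinticAntideriv_neg_four_fifths ha
end

section
/- Let a = (5 + i√5)/3 and p = X⁵/5 − (2+a)X⁴/4 + (1+2a)X³/3 − (a/2)X² (an antiderivative of X(X−1)²(X−a) vanishing at 0). Then (3a² − 5a)/(5a − 10) = 1, p(a) = 0 = p(0), p(1) ≠ 0, p has exactly two distinct critical values 0 and p(1), the multiset of root multiplicities of p − 0 is {2,2,1}, and the multiset of root multiplicities of p − p(1) is {3,1,1}. (Thus p is a Chebyshev polynomial defining the 5-edge tree T_4.) -/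
open Polynomial

/-!
Since `p' = X (X - 1)² (X - a)`, the critical values are `p 0 = 0`, `p 1` and
`p a = -a³ (3a² - 10a + 10) / 60`, which vanishes because `a` is a root of `3X² - 10X + 10`.
That relation alone also yields the factorisations `p = X² (X - a)² (X - (10 - 3a)/4) / 5` and
`p - p 1 = (X - 1)³ (X - u₊) (X - u₋) / 5` with `u± = ((5 ± 3√3) a - 2) / 8`, and shows that the
roots displayed in each are distinct, which gives the two fibres' multiplicities.
-/

theorem fiberMults_eq_of_three_roots {p : ℂ[X]} {α c x y z : ℂ} {l m n : ℕ}
    (hc : c ≠ 0) (hxy : x ≠ y) (hxz : x ≠ z) (hyz : y ≠ z) (hl : l ≠ 0) (hm : m ≠ 0)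
    (hn : n ≠ 0) (hp : p - C α = C c * ((X - C x) ^ l * (X - C y) ^ m * (X - C z) ^ n)) :
    fiberMults p α = {l, m, n} := by
  have hroots : (p - C α).roots = l • {x} + m • {y} + n • {z} := by
    rw [hp, roots_C_mul _ hc, roots_mul, roots_mul, roots_pow, roots_pow, roots_pow,
      roots_X_sub_C, roots_X_sub_C, roots_X_sub_C]
    all_goals simp [X_sub_C_ne_zero]
  have hdedup : (p - C α).roots.dedup = {x, y, z} := by
    refine (Multiset.Nodup.ext (Multiset.nodup_dedup _) (by simp [hxy, hxz, hyz])).2 fun t => ?_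
    simp [hroots, hl, hm, hn, or_assoc]
  rw [fiberMults, Multiset.toFinset_val, hdedup]
  simp [← count_roots, hroots, Multiset.count_singleton, hxy, hxz, hyz, hxy.symm, hxz.symm, hyz.symm]

namespace ChebyshevT4

noncomputable def poly (a : ℂ) : ℂ[X] :=
  C (1 / 5) * X ^ 5 - C ((2 + a) / 4) * X ^ 4 + C ((1 + 2 * a) / 3) * X ^ 3 - C (a / 2) * X ^ 2

noncomputable def simpleZero (a : ℂ) : ℂ := (10 - 3 * a) / 4

noncomputable def simplePreimage (a w : ℂ) : ℂ := ((5 + 3 * w) * a - 2) / 8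

theorem derivative_poly (a : ℂ) : derivative (poly a) = X * (X - 1) ^ 2 * (X - C a) := by
  apply Polynomial.funext
  intro x
  simp only [poly, derivative_sub, derivative_add, derivative_mul, derivative_C, zero_mul, zero_add,
    derivative_X_pow, map_natCast, eval_sub, eval_add, eval_mul, eval_C, eval_pow, eval_X, eval_one,
    eval_natCast]
  ring

theorem poly_eval_zero (a : ℂ) : (poly a).eval 0 = 0 := by
  simp [poly]

theorem poly_eval_one (a : ℂ) : (poly a).eval 1 = (2 - 5 * a) / 60 := by
  simp only [poly, eval_sub, eval_add, eval_mul, eval_C, eval_pow, eval_X]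
  ring

variable {a w : ℂ}

theorem poly_eval_self (ha : 3 * a ^ 2 - 10 * a + 10 = 0) : (poly a).eval a = 0 := by
  simp only [poly, eval_sub, eval_add, eval_mul, eval_C, eval_pow, eval_X]
  linear_combination (-a ^ 3 / 60) * ha

theorem poly_sub_C_zero_eq (ha : 3 * a ^ 2 - 10 * a + 10 = 0) :
    poly a - C 0 = C (1 / 5) * ((X - C 0) ^ 2 * (X - C a) ^ 2 * (X - C (simpleZero a)) ^ 1) := by
  apply Polynomial.funext
  intro x
  simp only [poly, simpleZero, eval_sub, eval_add, eval_mul, eval_C, eval_pow, eval_X]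
  linear_combination (x ^ 3 / 30 - a * x ^ 2 / 20) * ha

theorem poly_sub_C_eval_one_eq (ha : 3 * a ^ 2 - 10 * a + 10 = 0) (hw : w ^ 2 = 3) :
    poly a - C ((poly a).eval 1) = C (1 / 5) * ((X - C 1) ^ 3 *
      (X - C (simplePreimage a w)) ^ 1 * (X - C (simplePreimage a (-w))) ^ 1) := by
  rw [poly_eval_one]
  apply Polynomial.funext
  intro x
  simp only [poly, simplePreimage, eval_sub, eval_add, eval_mul, eval_C, eval_pow, eval_X]
  linear_combination ((x - 1) ^ 3 / 480) * ha + (9 * a ^ 2 * (x - 1) ^ 3 / 320) * hw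

theorem ne_zero (ha : 3 * a ^ 2 - 10 * a + 10 = 0) : a ≠ 0 := by
  intro h
  have : (10 : ℂ) = 0 := by linear_combination ha - (3 * a - 10) * h
  norm_num at this

theorem ne_two (ha : 3 * a ^ 2 - 10 * a + 10 = 0) : a ≠ 2 := by
  intro h
  have : (2 : ℂ) = 0 := by linear_combination ha - (3 * a - 4) * h
  norm_num at this

theorem simpleZero_ne_zero (ha : 3 * a ^ 2 - 10 * a + 10 = 0) : simpleZero a ≠ 0 := by
  intro h
  rw [simpleZero] at h
  have : (10 : ℂ) = 0 := by linear_combination ha + 4 * a * h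
  norm_num at this

theorem ne_simpleZero (ha : 3 * a ^ 2 - 10 * a + 10 = 0) : a ≠ simpleZero a := by
  intro h
  rw [simpleZero] at h
  have : (90 / 49 : ℂ) = 0 := by linear_combination ha - 4 * (3 * a / 7 - 40 / 49) * h
  norm_num at this

theorem poly_eval_one_ne_zero (ha : 3 * a ^ 2 - 10 * a + 10 = 0) : (poly a).eval 1 ≠ 0 := by
  rw [poly_eval_one]
  intro h
  have : (162 / 25 : ℂ) = 0 := by linear_combination ha + 60 * (3 * a / 5 - 44 / 25) * h
  norm_num at this

theorem one_ne_simplePreimage (ha : 3 * a ^ 2 - 10 * a + 10 = 0) (hw : w ^ 2 = 3) :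
    1 ≠ simplePreimage a w := by
  intro h
  rw [simplePreimage] at h
  have : (320 : ℂ) = 0 := by
    linear_combination (5 + 3 * w) ^ 2 * ha - 90 * hw +
      8 * (10 + 3 * ((5 + 3 * w) * a - 10) - 30 * w) * h
  norm_num at this

theorem simplePreimage_ne_neg (ha : 3 * a ^ 2 - 10 * a + 10 = 0) (hw : w ^ 2 = 3) :
    simplePreimage a w ≠ simplePreimage a (-w) := by
  intro h
  simp only [simplePreimage] at h
  have hw0 : w ≠ 0 := by rintro rfl; norm_num at hw
  have : w * a = 0 := by linear_combination (4 / 3) * h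
  exact mul_ne_zero hw0 (ne_zero ha) this

theorem criticalValues_poly (ha : 3 * a ^ 2 - 10 * a + 10 = 0) :
    criticalValues (poly a) = {0, (poly a).eval 1} := by
  have hcrit : {x : ℂ | (derivative (poly a)).eval x = 0} = {0, 1, a} := by
    ext x
    simp [derivative_poly, sub_eq_zero, or_assoc]
  rw [criticalValues, hcrit, Set.image_insert_eq, Set.image_insert_eq, Set.image_singleton,
    poly_eval_zero, poly_eval_self ha, Set.pair_comm, Set.insert_eq_of_mem (by simp)]

theorem fiberMults_poly_zero (ha : 3 * a ^ 2 - 10 * a + 10 = 0) :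
    fiberMults (poly a) 0 = {2, 2, 1} :=
  fiberMults_eq_of_three_roots (by norm_num) (ne_zero ha).symm (simpleZero_ne_zero ha).symm
    (ne_simpleZero ha) two_ne_zero two_ne_zero one_ne_zero (poly_sub_C_zero_eq ha)

theorem fiberMults_poly_eval_one (ha : 3 * a ^ 2 - 10 * a + 10 = 0) (hw : w ^ 2 = 3) :
    fiberMults (poly a) ((poly a).eval 1) = {3, 1, 1} :=
  fiberMults_eq_of_three_roots (by norm_num) (one_ne_simplePreimage ha hw)
    (one_ne_simplePreimage ha (by rwa [neg_sq])) (simplePreimage_ne_neg ha hw)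
    three_ne_zero one_ne_zero one_ne_zero (poly_sub_C_eval_one_eq ha hw)

end ChebyshevT4

open ChebyshevT4

/-- For `a = (5 + i√5)/3`, the polynomial `p = ∫ x(x-1)²(x-a) dx` is a Chebyshev
polynomial defining the 5-edge tree `T₄`: its critical values are `0` and `p(1)`,
the fiber over `0` has multiplicities `{2,2,1}` and the fiber over `p(1)` has
multiplicities `{3,1,1}`. -/
theorem chebyshev_T4 :
    let a : ℂ := (5 + Complex.I * (Real.sqrt 5 : ℂ)) / 3
    let p : ℂ[X] := C (1 / 5) * X ^ 5 - C ((2 + a) / 4) * X ^ 4 +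
      C ((1 + 2 * a) / 3) * X ^ 3 - C (a / 2) * X ^ 2
    (3 * a ^ 2 - 5 * a) / (5 * a - 10) = 1 ∧
    p.eval a = 0 ∧ p.eval 0 = 0 ∧ p.eval 1 ≠ 0 ∧
    criticalValues p = {0, p.eval 1} ∧
    fiberMults p 0 = {2, 2, 1} ∧
    fiberMults p (p.eval 1) = {3, 1, 1} := by
  intro a p
  have h5 : ((Real.sqrt 5 : ℝ) : ℂ) ^ 2 = 5 := by norm_cast; simp
  have h3 : ((Real.sqrt 3 : ℝ) : ℂ) ^ 2 = 3 := by norm_cast; simp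
  have ha : 3 * a ^ 2 - 10 * a + 10 = 0 := by
    linear_combination (-1 / 3 : ℂ) * h5 + ((Real.sqrt 5 : ℂ) ^ 2 / 3) * Complex.I_sq
  have hratio : (3 * a ^ 2 - 5 * a) / (5 * a - 10) = 1 := by
    refine (div_eq_one_iff_eq fun h => ne_two ha ?_).2 (by linear_combination ha)
    linear_combination h / 5
  exact ⟨hratio, poly_eval_self ha, poly_eval_zero a, poly_eval_one_ne_zero ha,
    criticalValues_poly ha, fiberMults_poly_zero ha, fiberMults_poly_eval_one ha h3⟩
end

section
/- Let p ∈ ℂ[X] be the antiderivative vanishing at 0 of (X² − 1)(X − i/√3)²(X − i√3). Then p(−1) = p(1) = p(i√3), this common value is different from p(i/√3), so p has exactly two distinct critical values; moreover the multiset of root multiplicities of p − p(1) is {2,2,2} and the multiset of root multiplicities of p − p(i/√3) is {3,1,1,1}. (Thus p is a degree-6 Chebyshev polynomial defining the 6-edge tree T_12, obtained by degenerating the Zolotarev family ∫(x²−1)(x−a)(x−b)(x−c)dx with p(−1)=p(1)=p(c) at a = b = i/√3, c = i√3.) -/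
/-!
Put `a = i/√3`, so `a² = -1/3`. The cubic `q = (X² - 1)(X - 3a)` then satisfies
`q' = 3X² - 6aX - 1 = 3(X - a)²`, hence `p = q²/6 + 1/2`: the critical points are `±1, 3a`
(simple roots of `q`, value `1/2`) and `a` (a double root of `p'`, value `17/162`).
A root `x` of `p - c` has multiplicity `1 + mult_x p'`, and these multiplicities add up to
`deg p = 6`. Over `1/2` the three critical points already account for `2 + 2 + 2 = 6`; over
`17/162` the triple root `a` leaves room for exactly three simple roots.
-/

open Polynomial

theorem Polynomial.eq_of_derivative_eq_of_eval_eq {R : Type*} [CommRing R] [IsAddTorsionFree R]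
    {p q : R[X]} (hd : p.derivative = q.derivative) {x : R} (hx : p.eval x = q.eval x) :
    p = q := by
  have hconst : p - q = C ((p - q).coeff 0) :=
    eq_C_of_natDegree_eq_zero (derivative_eq_zero.mp (by rw [derivative_sub, hd, sub_self]))
  have hcoeff := congrArg (eval x) hconst
  rw [eval_sub, hx, sub_self, eval_C] at hcoeff
  rwa [← hcoeff, map_zero, sub_eq_zero] at hconst

theorem sub_C_ne_zero_of_natDegree_ne_zero {R : Type*} [Ring R] {p : R[X]}
    (hp : p.natDegree ≠ 0) (c : R) :
    p - C c ≠ 0 := fun h => hp (by rw [← natDegree_sub_C (a := c), h, natDegree_zero])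

theorem rootMultiplicity_sub_C_of_eval_eq {R : Type*} [CommRing R] [IsDomain R] [CharZero R]
    {p : R[X]} (hp : p.natDegree ≠ 0) {c x : R}
    (hx : p.eval x = c) :
    (p - C c).rootMultiplicity x = p.derivative.rootMultiplicity x + 1 := by
  have hroot : (p - C c).IsRoot x := by simp [hx]
  have hpos := (rootMultiplicity_pos (sub_C_ne_zero_of_natDegree_ne_zero hp c)).mpr hroot
  have hderiv := derivative_rootMultiplicity_of_root hroot
  rw [derivative_sub, derivative_C, sub_zero] at hderiv
  omega

theorem fiberMults_eq_of_criticalPoints {p : ℂ[X]} (hp : p.natDegree ≠ 0) (c : ℂ) (K : Finset ℂ)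
    (hK : ∀ x, x ∈ K ↔ p.eval x = c ∧ p.derivative.eval x = 0) :
    fiberMults p c = K.val.map (fun x => p.derivative.rootMultiplicity x + 1) +
      Multiset.replicate (p.natDegree - ∑ x ∈ K, (p.derivative.rootMultiplicity x + 1)) 1 := by
  classical
  set g : ℂ → ℕ := fun x => p.derivative.rootMultiplicity x + 1
  set S := (p - C c).roots.toFinset
  have hS : ∀ x, x ∈ S ↔ p.eval x = c := by
    intro x
    simp [S, mem_roots (sub_C_ne_zero_of_natDegree_ne_zero hp c), sub_eq_zero]
  have hmult : ∀ x ∈ S, (p - C c).rootMultiplicity x = g x :=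
    fun x hx => rootMultiplicity_sub_C_of_eval_eq hp ((hS x).mp hx)
  have hKS : K = S.filter (fun x => p.derivative.eval x = 0) := by
    ext x; simp [hK, hS]
  have hregular : ∀ x ∈ S.filter (fun x => ¬ p.derivative.eval x = 0), g x = 1 := by
    intro x hx
    simp only [g, rootMultiplicity_eq_zero (Finset.mem_filter.mp hx).2]
  have hsum : ∑ x ∈ S, g x = p.natDegree := by
    rw [← Finset.sum_congr rfl hmult, Finset.sum_congr rfl (fun x _ => (count_roots _).symm),
      Multiset.toFinset_sum_count_eq, IsAlgClosed.card_roots_eq_natDegree, natDegree_sub_C]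
  have hcard :
      (S.filter (fun x => ¬ p.derivative.eval x = 0)).card = p.natDegree - ∑ x ∈ K, g x := by
    rw [← hsum, ← Finset.sum_filter_add_sum_filter_not S (fun x => p.derivative.eval x = 0),
      Finset.sum_congr rfl hregular, hKS]
    simp
  unfold fiberMults
  rw [Multiset.map_congr rfl hmult, ← hcard, hKS,
    ← Multiset.filter_add_not (fun x => p.derivative.eval x = 0) S.val, Multiset.map_add]
  congr 1
  exact (Multiset.map_congr rfl hregular).trans (Multiset.map_const' _ _)

noncomputable def t12Cubic (a : ℂ) : ℂ[X] := (X ^ 2 - 1) * (X - C (3 * a))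

noncomputable def t12Poly (a : ℂ) : ℂ[X] := C 6⁻¹ * t12Cubic a ^ 2 + C 2⁻¹

section T12

variable {a : ℂ}

theorem derivative_t12Cubic (ha : a ^ 2 = -(1 / 3)) :
    derivative (t12Cubic a) = C 3 * (X - C a) ^ 2 := by
  refine Polynomial.funext fun x => ?_
  simp only [t12Cubic, derivative_mul, derivative_sub, derivative_X_pow, derivative_X,
    derivative_C, derivative_one, eval_mul, eval_add, eval_sub, eval_pow, eval_C, eval_X,
    eval_one, eval_zero]
  linear_combination (-3 : ℂ) * ha

theorem derivative_t12Poly (ha : a ^ 2 = -(1 / 3)) :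
    derivative (t12Poly a) = (X ^ 2 - 1) * (X - C a) ^ 2 * (X - C (3 * a)) := by
  rw [t12Poly, derivative_add, derivative_C, add_zero, derivative_C_mul, derivative_pow,
    derivative_t12Cubic ha, t12Cubic]
  refine Polynomial.funext fun x => ?_
  simp only [eval_mul, eval_sub, eval_pow, eval_C, eval_X, eval_one]
  ring

theorem natDegree_t12Poly : (t12Poly a).natDegree = 6 := by
  unfold t12Poly t12Cubic
  compute_degree!

@[simp] theorem eval_t12Poly_one : (t12Poly a).eval 1 = 1 / 2 := by simp [t12Poly, t12Cubic]

@[simp] theorem eval_t12Poly_neg_one : (t12Poly a).eval (-1) = 1 / 2 := by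
  simp [t12Poly, t12Cubic]

@[simp] theorem eval_t12Poly_three_mul : (t12Poly a).eval (3 * a) = 1 / 2 := by
  simp [t12Poly, t12Cubic]

theorem eval_t12Poly_self (ha : a ^ 2 = -(1 / 3)) : (t12Poly a).eval a = 17 / 162 := by
  simp only [t12Poly, t12Cubic, eval_add, eval_mul, eval_pow, eval_sub, eval_C, eval_X, eval_one]
  linear_combination ((2 / 3) * a ^ 4 - (14 / 9) * a ^ 2 + 32 / 27) * ha

theorem eval_t12Poly_zero (ha : a ^ 2 = -(1 / 3)) : (t12Poly a).eval 0 = 0 := by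
  simp only [t12Poly, t12Cubic, eval_add, eval_mul, eval_pow, eval_sub, eval_C, eval_X, eval_one]
  linear_combination (3 / 2 : ℂ) * ha

theorem t12_critical_points_ne (ha : a ^ 2 = -(1 / 3)) :
    (1 : ℂ) ≠ -1 ∧ a ≠ 1 ∧ a ≠ -1 ∧ 3 * a ≠ 1 ∧ 3 * a ≠ -1 ∧ a ≠ 3 * a := by
  have hsq : ∀ x y : ℂ, x ^ 2 ≠ y ^ 2 → x ≠ y := fun x y h e => h (e ▸ rfl)
  have h3a : (3 * a) ^ 2 = -3 := by linear_combination 9 * ha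
  refine ⟨by norm_num, hsq _ _ ?_, hsq _ _ ?_, hsq _ _ ?_, hsq _ _ ?_, hsq _ _ ?_⟩ <;>
    simp only [h3a, ha] <;> norm_num

theorem roots_derivative_t12Poly (ha : a ^ 2 = -(1 / 3)) :
    (derivative (t12Poly a)).roots = {1, -1, a, a, 3 * a} := by
  have hprod : derivative (t12Poly a) =
      (({1, -1, a, a, 3 * a} : Multiset ℂ).map fun x => X - C x).prod := by
    rw [derivative_t12Poly ha]
    simp
    ring
  rw [hprod, roots_multiset_prod_X_sub_C]

theorem eval_derivative_t12Poly_eq_zero_iff (ha : a ^ 2 = -(1 / 3)) {x : ℂ} :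
    (derivative (t12Poly a)).eval x = 0 ↔ x = 1 ∨ x = -1 ∨ x = a ∨ x = 3 * a := by
  have hne : derivative (t12Poly a) ≠ 0 := by
    rw [Ne, derivative_eq_zero, natDegree_t12Poly]; norm_num
  rw [← IsRoot.def, ← mem_roots hne, roots_derivative_t12Poly ha]
  simp

theorem criticalValues_t12Poly (ha : a ^ 2 = -(1 / 3)) :
    criticalValues (t12Poly a) = {1 / 2, 17 / 162} := by
  have hcrit : {x | (derivative (t12Poly a)).eval x = 0} = {1, -1, a, 3 * a} := by
    ext x; simp [eval_derivative_t12Poly_eq_zero_iff ha]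
  rw [criticalValues, hcrit]
  ext; simp [eval_t12Poly_self ha]; tauto

theorem fiberMults_t12Poly_half (ha : a ^ 2 = -(1 / 3)) :
    fiberMults (t12Poly a) (1 / 2) = {2, 2, 2} := by
  obtain ⟨h1, ha1, ha2, h3a1, h3a2, ha3⟩ := t12_critical_points_ne ha
  rw [fiberMults_eq_of_criticalPoints (by rw [natDegree_t12Poly]; norm_num) _ {1, -1, 3 * a}]
  · simp [← count_roots, roots_derivative_t12Poly ha, natDegree_t12Poly, h1, h3a1, h3a2, ha3,
      h1.symm, ha1.symm, ha2.symm, h3a1.symm, h3a2.symm, ha3.symm]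
  · intro x
    rw [eval_derivative_t12Poly_eq_zero_iff ha]
    simp only [Finset.mem_insert, Finset.mem_singleton]
    constructor
    · rintro (rfl | rfl | rfl) <;> simp
    · rintro ⟨hx, rfl | rfl | rfl | rfl⟩ <;> simp_all [eval_t12Poly_self ha]
      norm_num at hx

theorem fiberMults_t12Poly_self (ha : a ^ 2 = -(1 / 3)) :
    fiberMults (t12Poly a) (17 / 162) = {3, 1, 1, 1} := by
  obtain ⟨-, ha1, ha2, -, -, ha3⟩ := t12_critical_points_ne ha
  rw [fiberMults_eq_of_criticalPoints (by rw [natDegree_t12Poly]; norm_num) _ {a}]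
  · simp [← count_roots, roots_derivative_t12Poly ha, natDegree_t12Poly, ha1, ha2, ha3]
    decide
  · intro x
    rw [eval_derivative_t12Poly_eq_zero_iff ha]
    simp only [Finset.mem_singleton]
    constructor
    · rintro rfl; simp [eval_t12Poly_self ha]
    · rintro ⟨hx, rfl | rfl | rfl | rfl⟩ <;> simp_all <;> norm_num at hx

end T12

/-- Let `p` be the antiderivative vanishing at `0` of `(X²-1)(X - i/√3)²(X - i√3)`.
Then `p(-1) = p(1) = p(i√3) ≠ p(i/√3)`, so `p` is a degree-6 Chebyshev polynomial; its
fiber multiplicity multisets are `{2,2,2}` over `p(1)` and `{3,1,1,1}` over `p(i/√3)`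
(the tree `T₁₂`). -/
theorem chebyshev_T12 (p : ℂ[X])
    (hderiv : p.derivative = (X ^ 2 - 1) *
      (X - C (Complex.I / (Real.sqrt 3 : ℂ))) ^ 2 *
      (X - C (Complex.I * (Real.sqrt 3 : ℂ))))
    (h0 : p.eval 0 = 0) :
    p.eval (-1) = p.eval 1 ∧
    p.eval 1 = p.eval (Complex.I * (Real.sqrt 3 : ℂ)) ∧
    p.eval 1 ≠ p.eval (Complex.I / (Real.sqrt 3 : ℂ)) ∧
    criticalValues p = {p.eval 1, p.eval (Complex.I / (Real.sqrt 3 : ℂ))} ∧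
    fiberMults p (p.eval 1) = {2, 2, 2} ∧
    fiberMults p (p.eval (Complex.I / (Real.sqrt 3 : ℂ))) = {3, 1, 1, 1} := by
  have hsqrt : ((Real.sqrt 3 : ℝ) : ℂ) ^ 2 = 3 := by
    norm_cast; exact Real.sq_sqrt (by norm_num)
  have h3a : Complex.I * (Real.sqrt 3 : ℂ) = 3 * (Complex.I / (Real.sqrt 3 : ℂ)) := by
    have : (Real.sqrt 3 : ℂ) ≠ 0 := by rintro h; simp [h] at hsqrt
    rw [← hsqrt]
    field_simp
  have ha : (Complex.I / (Real.sqrt 3 : ℂ)) ^ 2 = -(1 / 3) := by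
    rw [div_pow, Complex.I_sq, hsqrt]; norm_num
  rw [h3a] at hderiv ⊢
  generalize Complex.I / (Real.sqrt 3 : ℂ) = a at ha hderiv ⊢
  obtain rfl : p = t12Poly a :=
    eq_of_derivative_eq_of_eval_eq (hderiv.trans (derivative_t12Poly ha).symm)
      (h0.trans (eval_t12Poly_zero ha).symm)
  rw [eval_t12Poly_one, eval_t12Poly_neg_one, eval_t12Poly_three_mul, eval_t12Poly_self ha]
  exact ⟨rfl, rfl, by norm_num, criticalValues_t12Poly ha, fiberMults_t12Poly_half ha,
    fiberMults_t12Poly_self ha⟩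
end
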